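/- arXiv:2509.17875 — 10 statements merged into one kernel-verified Lean document; each statement's English description precedes it below -/
import Mathlib

section
/- Every element of H is a continuous function: for each f ∈ H, the function ι f : ℝ≥0 → ℝ is continuous. Moreover, convergence in H implies locally uniform convergence: if (fₙ) is a sequence in H with fₙ → f∞ in the norm of H, then for every x₁ ≥ 0 one has sup_{x ∈ [0,x₁]} |ι fₙ(x) − ι f∞(x)| → 0 as n → ∞. -/
open scoped NNReal
open Filter Topology

/-! Writing `δ₀` for evaluation at `0`, the shift property gives `ι f x = δ₀ (S x f)`, so `ι f` is
the orbit `x ↦ S x f` followed by a continuous functional. On a compact interval the operators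
`S x` are bounded in norm by some `C` (Banach–Steinhaus applied to the bounded orbits), hence
`|ι fₙ x - ι f x| ≤ ‖δ₀‖ C ‖fₙ - f‖` there. -/

section UniformBounds

variable {X 𝕜 E F : Type*} [NontriviallyNormedField 𝕜]
  [NormedAddCommGroup E] [NormedSpace 𝕜 E] [NormedAddCommGroup F] [NormedSpace 𝕜 F]

theorem exists_forall_opNorm_le_of_isCompact [TopologicalSpace X] [CompleteSpace E] {K : Set X}
    (hK : IsCompact K)
    {T : X → E →L[𝕜] F} (hT : ∀ f, ContinuousOn (fun x => T x f) K) :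
    ∃ C, ∀ x ∈ K, ‖T x‖ ≤ C := by
  obtain ⟨C, hC⟩ := banach_steinhaus (g := fun x : K => T x) fun f => by
    obtain ⟨C, hC⟩ := hK.exists_bound_of_continuousOn (hT f)
    exact ⟨C, fun x => hC x x.2⟩
  exact ⟨C, fun x hx => hC ⟨x, hx⟩⟩

theorem tendstoUniformlyOn_apply_of_opNorm_le {C : ℝ} {K : Set X} {T : X → E →L[𝕜] F}
    (hC : ∀ x ∈ K, ‖T x‖ ≤ C) {ι : Type*} {l : Filter ι} {u : ι → E} {f : E}
    (hu : Tendsto u l (𝓝 f)) :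
    TendstoUniformlyOn (fun n x => T x (u n)) (fun x => T x f) l K := by
  rw [Metric.tendstoUniformlyOn_iff]
  intro ε hε
  have hnorm := (tendsto_iff_norm_sub_tendsto_zero.mp hu).const_mul C
  rw [mul_zero] at hnorm
  filter_upwards [hnorm.eventually (gt_mem_nhds hε)] with n hn x hx
  rw [dist_eq_norm', ← map_sub]
  grw [(T x).le_opNorm, hC x hx]
  exact hn

end UniformBounds

theorem tendsto_iSup_abs_sub_of_tendstoUniformlyOn {X ι : Type*} {l : Filter ι} {K : Set X}
    {g : ι → X → ℝ} {g₀ : X → ℝ} (h : TendstoUniformlyOn g g₀ l K) :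
    Tendsto (fun n => ⨆ x : K, |g n x - g₀ x|) l (𝓝 0) := by
  rw [Metric.tendsto_nhds]
  intro ε hε
  filter_upwards [Metric.tendstoUniformlyOn_iff.mp h (ε / 2) (half_pos hε)] with n hn
  have hle : ⨆ x : K, |g n x - g₀ x| ≤ ε / 2 :=
    Real.iSup_le (fun x => by simpa [Real.dist_eq, abs_sub_comm] using (hn x x.2).le)
      (half_pos hε).le
  rw [Real.dist_0_eq_abs, abs_of_nonneg (Real.iSup_nonneg fun _ => abs_nonneg _)]
  linarith

theorem stmt0_general
    {H : Type*} [NormedAddCommGroup H] [InnerProductSpace ℝ H]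
    [CompleteSpace H]
    (ι : H →ₗ[ℝ] (ℝ≥0 → ℝ))
    (hH1 : Continuous fun f : H => ι f 0)
    (S : ℝ≥0 → H →L[ℝ] H)
    (hshift : ∀ (h : ℝ≥0) (f : H) (x : ℝ≥0), ι (S h f) x = ι f (x + h))
    (hScont : ∀ f : H, Continuous fun h : ℝ≥0 => S h f) :
    (∀ f : H, Continuous (ι f)) ∧
    (∀ (fseq : ℕ → H) (flim : H), Tendsto fseq atTop (𝓝 flim) →
      ∀ x₁ : ℝ≥0,
        Tendsto (fun n => ⨆ x : Set.Icc (0 : ℝ≥0) x₁, |ι (fseq n) x.1 - ι flim x.1|)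
          atTop (𝓝 0)) := by
  obtain ⟨δ₀, hδ₀⟩ : ∃ δ₀ : H →L[ℝ] ℝ, ∀ f, δ₀ f = ι f 0 :=
    ⟨⟨(LinearMap.proj (0 : ℝ≥0)).comp ι, hH1⟩, fun _ => rfl⟩
  have hι_eq : ∀ f x, ι f x = δ₀.comp (S x) f := fun f x => by
    simpa [hδ₀] using (hshift x f 0).symm
  have hcont : ∀ f : H, Continuous fun x => δ₀.comp (S x) f := fun f =>
    δ₀.continuous.comp (hScont f)
  refine ⟨fun f => ?_, fun fseq flim hlim x₁ => ?_⟩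
  · rw [show ι f = _ from funext (hι_eq f)]
    exact hcont f
  obtain ⟨C, hC⟩ := exists_forall_opNorm_le_of_isCompact (isCompact_Icc (a := 0) (b := x₁))
    fun f => (hcont f).continuousOn
  simpa only [hι_eq] using tendsto_iSup_abs_sub_of_tendstoUniformlyOn
    (tendstoUniformlyOn_apply_of_opNorm_le hC hlim)

theorem stmt0
    {H : Type*} [NormedAddCommGroup H] [InnerProductSpace ℝ H]
    [CompleteSpace H] [TopologicalSpace.SeparableSpace H]
    (ι : H →ₗ[ℝ] (ℝ≥0 → ℝ)) (hι : Function.Injective ι)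
    (hH1 : Continuous fun f : H => ι f 0)
    (S : ℝ≥0 → H →L[ℝ] H)
    (hshift : ∀ (h : ℝ≥0) (f : H) (x : ℝ≥0), ι (S h f) x = ι f (x + h))
    (hS0 : S 0 = ContinuousLinearMap.id ℝ H)
    (hSadd : ∀ a b : ℝ≥0, S (a + b) = (S a).comp (S b))
    (hScont : ∀ f : H, Continuous fun h : ℝ≥0 => S h f) :
    (∀ f : H, Continuous (ι f)) ∧
    (∀ (fseq : ℕ → H) (flim : H), Tendsto fseq atTop (𝓝 flim) →
      ∀ x₁ : ℝ≥0,
        Tendsto (fun n => ⨆ x : Set.Icc (0 : ℝ≥0) x₁, |ι (fseq n) x.1 - ι flim x.1|)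
          atTop (𝓝 0)) :=
  stmt0_general ι hH1 S hshift hScont
end

section
/- (a) For each x ≥ 0, the map J_x : H → ℝ, f ↦ ∫₀ˣ (ι f)(s) ds, is a well-defined continuous linear functional on H. (b) For each f ∈ H, the map x ↦ J_x f is continuously differentiable on ℝ≥0 with derivative x ↦ (ι f)(x). (c) The map ℝ≥0 × H → ℝ, (x, f) ↦ J_x f, is jointly continuous. -/
/-!
Evaluation at `x` is the continuous functional `f ↦ (ι (S_x f))(0)`, and it depends strongly
continuously on `x`. By Banach–Steinhaus its norm is locally bounded in `x`, so `J_x` is bounded and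
`x ↦ J_x` is locally Lipschitz in operator norm; joint continuity then follows from the continuity
of `(T, f) ↦ T f`.
-/

open scoped NNReal
open Filter Topology MeasureTheory

section StrongIntegral

variable {E F : Type*} [NormedAddCommGroup E] [NormedSpace ℝ E]
  [NormedAddCommGroup F] [NormedSpace ℝ F] {T : ℝ → E →L[ℝ] F}

theorem exists_forall_opNorm_le_of_continuous_apply [CompleteSpace E]
    (hT : ∀ f, Continuous fun s => T s f) {K : Set ℝ} (hK : IsCompact K) :
    ∃ C, ∀ s ∈ K, ‖T s‖ ≤ C := by
  obtain ⟨C, hC⟩ := banach_steinhaus (g := fun s : K => T s) fun f =>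
    (hK.exists_bound_of_continuousOn (hT f).continuousOn).imp fun _ hC s => hC s s.2
  exact ⟨C, fun s hs => hC ⟨s, hs⟩⟩

theorem norm_intervalIntegral_apply_le {a b C : ℝ} (hC : ∀ s ∈ Set.uIcc a b, ‖T s‖ ≤ C)
    (f : E) : ‖∫ s in a..b, T s f‖ ≤ C * ‖f‖ * |b - a| :=
  intervalIntegral.norm_integral_le_of_norm_le_const fun s hs =>
    (T s).le_of_opNorm_le (hC s (Set.uIoc_subset_uIcc hs)) f

/-- Defined pointwise in `f`, since `s ↦ T s` need not be Bochner integrable in operator norm. -/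
noncomputable def strongIntervalIntegral [CompleteSpace E]
    (hT : ∀ f, Continuous fun s => T s f) (a b : ℝ) : E →L[ℝ] F :=
  LinearMap.mkContinuousOfExistsBound
    { toFun := fun f => ∫ s in a..b, T s f
      map_add' := fun f g => by
        simp only [map_add]
        exact intervalIntegral.integral_add ((hT f).intervalIntegrable a b)
          ((hT g).intervalIntegrable a b)
      map_smul' := fun c f => by
        simp only [map_smul, RingHom.id_apply]
        exact intervalIntegral.integral_smul c _ }
    (by
      obtain ⟨C, hC⟩ := exists_forall_opNorm_le_of_continuous_apply hT isCompact_uIcc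
      exact ⟨C * |b - a|, fun f => by
        simpa only [LinearMap.coe_mk, AddHom.coe_mk, mul_right_comm]
          using norm_intervalIntegral_apply_le hC f⟩)

variable [CompleteSpace E] (hT : ∀ f, Continuous fun s => T s f)

@[simp]
theorem strongIntervalIntegral_apply (a b : ℝ) (f : E) :
    strongIntervalIntegral hT a b f = ∫ s in a..b, T s f :=
  rfl

theorem norm_strongIntervalIntegral_le {a b C : ℝ} (hC : ∀ s ∈ Set.uIcc a b, ‖T s‖ ≤ C) :
    ‖strongIntervalIntegral hT a b‖ ≤ C * |b - a| := by
  have hC0 : 0 ≤ C := (norm_nonneg _).trans (hC a Set.left_mem_uIcc)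
  refine ContinuousLinearMap.opNorm_le_bound _ (by positivity) fun f => ?_
  simpa only [strongIntervalIntegral_apply, mul_right_comm]
    using norm_intervalIntegral_apply_le hC f

theorem strongIntervalIntegral_sub_left (a b c : ℝ) :
    strongIntervalIntegral hT a c - strongIntervalIntegral hT a b =
      strongIntervalIntegral hT b c := by
  ext f
  exact intervalIntegral.integral_interval_sub_left ((hT f).intervalIntegrable a c)
    ((hT f).intervalIntegrable a b)

theorem continuous_strongIntervalIntegral (a : ℝ) :
    Continuous (strongIntervalIntegral hT a) := by
  refine continuous_iff_continuousAt.2 fun b₀ => ?_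
  obtain ⟨C, hC⟩ := exists_forall_opNorm_le_of_continuous_apply hT
    (isCompact_Icc (a := b₀ - 1) (b := b₀ + 1))
  have hbound : ∀ᶠ b in 𝓝 b₀,
      ‖strongIntervalIntegral hT a b - strongIntervalIntegral hT a b₀‖ ≤ C * |b - b₀| := by
    filter_upwards [Icc_mem_nhds (sub_one_lt b₀) (lt_add_one b₀)] with b hb
    rw [strongIntervalIntegral_sub_left]
    refine norm_strongIntervalIntegral_le hT fun s hs => hC s ?_
    exact Set.uIcc_subset_Icc ⟨by linarith, by linarith⟩ hb hs
  have hlim : Tendsto (fun b => C * |b - b₀|) (𝓝 b₀) (𝓝 0) := by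
    simpa using ((continuous_sub_right b₀).abs.const_mul C).tendsto b₀
  exact tendsto_iff_norm_sub_tendsto_zero.2 <|
    squeeze_zero' (Eventually.of_forall fun _ => norm_nonneg _) hbound hlim

theorem hasDerivAt_strongIntervalIntegral_apply [CompleteSpace F] (a b : ℝ) (f : E) :
    HasDerivAt (fun x => strongIntervalIntegral hT a x f) (T b f) b :=
  intervalIntegral.integral_hasDerivAt_right ((hT f).intervalIntegrable a b)
    (hT f).aestronglyMeasurable.stronglyMeasurableAtFilter (hT f).continuousAt

end StrongIntegral

theorem stmt1_general
    {H : Type*} [NormedAddCommGroup H] [InnerProductSpace ℝ H]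
    [CompleteSpace H]
    (ι : H →ₗ[ℝ] (ℝ≥0 → ℝ))
    (hH1 : Continuous fun f : H => ι f 0)
    (S : ℝ≥0 → H →L[ℝ] H)
    (hshift : ∀ (h : ℝ≥0) (f : H) (x : ℝ≥0), ι (S h f) x = ι f (x + h))
    (hScont : ∀ f : H, Continuous fun h : ℝ≥0 => S h f) :
    -- (a) J_x is a well-defined continuous linear functional
    (∀ x : ℝ≥0, ∃ J : H →L[ℝ] ℝ, ∀ f : H,
        J f = ∫ s in (0:ℝ)..(x:ℝ), ι f s.toNNReal) ∧
    -- (b) x ↦ J_x f is C¹ on ℝ≥0 with derivative (ι f)(x)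
    (∀ f : H,
      (∀ x : ℝ, 0 ≤ x →
        HasDerivWithinAt (fun y : ℝ => ∫ s in (0:ℝ)..y, ι f s.toNNReal)
          (ι f x.toNNReal) (Set.Ici 0) x) ∧
      Continuous fun x : ℝ≥0 => ι f x) ∧
    -- (c) (x, f) ↦ J_x f is jointly continuous
    Continuous (fun p : ℝ≥0 × H => ∫ s in (0:ℝ)..(p.1:ℝ), ι p.2 s.toNNReal) := by
  let ev₀ : H →L[ℝ] ℝ := ⟨LinearMap.proj 0 ∘ₗ ι, hH1⟩
  let ev (x : ℝ≥0) : H →L[ℝ] ℝ := ev₀.comp (S x)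
  have ev_apply (x : ℝ≥0) (f : H) : ev x f = ι f x := by
    change ι (S x f) 0 = ι f x
    rw [hshift, zero_add]
  have hev (f : H) : Continuous fun x => ev x f := ev₀.continuous.comp (hScont f)
  have hT (f : H) : Continuous fun s : ℝ => ev s.toNNReal f :=
    (hev f).comp continuous_real_toNNReal
  have J_apply (x : ℝ) (f : H) :
      strongIntervalIntegral hT 0 x f = ∫ s in (0:ℝ)..x, ι f s.toNNReal := by
    simp only [strongIntervalIntegral_apply, ev_apply]
  refine ⟨fun x => ⟨strongIntervalIntegral hT 0 x, J_apply x⟩,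
    fun f => ⟨fun x _ => ?_, ?_⟩, ?_⟩
  · simpa only [J_apply, ev_apply]
      using (hasDerivAt_strongIntervalIntegral_apply hT 0 x f).hasDerivWithinAt
  · simpa only [ev_apply] using hev f
  · simpa only [Function.comp_apply, J_apply] using
      ((continuous_strongIntervalIntegral hT 0).comp
        (NNReal.continuous_coe.comp continuous_fst)).clm_apply continuous_snd

theorem stmt1
    {H : Type*} [NormedAddCommGroup H] [InnerProductSpace ℝ H]
    [CompleteSpace H] [TopologicalSpace.SeparableSpace H]
    (ι : H →ₗ[ℝ] (ℝ≥0 → ℝ)) (hι : Function.Injective ι)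
    (hH1 : Continuous fun f : H => ι f 0)
    (S : ℝ≥0 → H →L[ℝ] H)
    (hshift : ∀ (h : ℝ≥0) (f : H) (x : ℝ≥0), ι (S h f) x = ι f (x + h))
    (hS0 : S 0 = ContinuousLinearMap.id ℝ H)
    (hSadd : ∀ a b : ℝ≥0, S (a + b) = (S a).comp (S b))
    (hScont : ∀ f : H, Continuous fun h : ℝ≥0 => S h f) :
    -- (a) J_x is a well-defined continuous linear functional
    (∀ x : ℝ≥0, ∃ J : H →L[ℝ] ℝ, ∀ f : H,
        J f = ∫ s in (0:ℝ)..(x:ℝ), ι f s.toNNReal) ∧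
    -- (b) x ↦ J_x f is C¹ on ℝ≥0 with derivative (ι f)(x)
    (∀ f : H,
      (∀ x : ℝ, 0 ≤ x →
        HasDerivWithinAt (fun y : ℝ => ∫ s in (0:ℝ)..y, ι f s.toNNReal)
          (ι f x.toNNReal) (Set.Ici 0) x) ∧
      Continuous fun x : ℝ≥0 => ι f x) ∧
    -- (c) (x, f) ↦ J_x f is jointly continuous
    Continuous (fun p : ℝ≥0 × H => ∫ s in (0:ℝ)..(p.1:ℝ), ι p.2 s.toNNReal) :=
  stmt1_general ι hH1 S hshift hScont
end

section
/- For each x ≥ 0, the evaluation functional δ_x : H → ℝ, f ↦ (ι f)(x), is continuous and linear; denoting by k_x ∈ H its Riesz representative, i.e. the unique element with ⟨k_x, f⟩_H = (ι f)(x) for all f ∈ H, the map ℝ≥0 → H, x ↦ k_x, is continuous. In particular, x ↦ k_x is locally Bochner integrable. -/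
open scoped NNReal RealInnerProductSpace
open Filter Topology MeasureTheory

/-!
Since `⟪k x, f⟫ = (ι f) x = (ι (S x f)) 0 = ⟪k 0, S x f⟫`, we have `k x = (S x)† (k 0)`, so the
point is that the adjoint semigroup `T x = (S x)†` is strongly continuous. It is locally bounded
by Banach–Steinhaus, hence the vectors whose orbit is continuous at `0` form a closed subspace `F`.
The averages `v = (∫₀ᵗ S s ds)† g` lie in `F`, because `T h v - T 0 v` is the adjoint of
`∫ₜᵗ⁺ʰ S s ds - ∫₀ʰ S s ds`, of norm `O(h)`. A vector `w ⊥ F` then satisfies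
`∫₀ᵗ ⟪g, S s w⟫ ds = 0` for all `t > 0`, so `⟪T 0 g, w⟫ = 0`; thus `T 0 g ∈ Fᗮᗮ = F`, which is
continuity of the orbit of `g` at `0`, and the semigroup law propagates it to every point.
-/

section OperatorFamilies

variable {𝕜 X E F : Type*} [NontriviallyNormedField 𝕜] [TopologicalSpace X]
  [NormedAddCommGroup E] [NormedSpace 𝕜 E] [NormedAddCommGroup F] [NormedSpace 𝕜 F]

theorem IsCompact.exists_forall_opNorm_le [CompleteSpace E] {T : X → E →L[𝕜] F}
    (hT : ∀ f, Continuous fun x => T x f) {K : Set X} (hK : IsCompact K) :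
    ∃ M, ∀ x ∈ K, ‖T x‖ ≤ M := by
  have hpt : ∀ f, ∃ C, ∀ x : K, ‖T x f‖ ≤ C := fun f =>
    let ⟨C, hC⟩ := hK.exists_bound_of_continuousOn (hT f).continuousOn
    ⟨C, fun x => hC x x.2⟩
  obtain ⟨M, hM⟩ := banach_steinhaus hpt
  exact ⟨M, fun x hx => hM ⟨x, hx⟩⟩

theorem exists_forall_le_opNorm_le [CompleteSpace E] {T : ℝ≥0 → E →L[𝕜] F}
    (hT : ∀ f, Continuous fun t => T t f) (t : ℝ≥0) : ∃ M, ∀ s ≤ t, ‖T s‖ ≤ M :=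
  let ⟨M, hM⟩ := (isCompact_Icc (a := 0) (b := t)).exists_forall_opNorm_le hT
  ⟨M, fun s hs => hM s ⟨zero_le, hs⟩⟩

def continuousAtSubmodule (T : X → E →L[𝕜] F) (x₀ : X) : Submodule 𝕜 E where
  carrier := {g | ContinuousAt (fun x => T x g) x₀}
  add_mem' {g g'} hg hg' := by
    simp only [Set.mem_ofPred_eq, map_add] at *
    exact hg.add hg'
  zero_mem' := by simpa only [Set.mem_ofPred_eq, map_zero] using continuousAt_const
  smul_mem' c g hg := by
    simp only [Set.mem_ofPred_eq, map_smul] at *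
    exact hg.const_smul c

theorem mem_continuousAtSubmodule {T : X → E →L[𝕜] F} {x₀ : X} {g : E} :
    g ∈ continuousAtSubmodule T x₀ ↔ ContinuousAt (fun x => T x g) x₀ :=
  Iff.rfl

theorem isClosed_continuousAtSubmodule {T : X → E →L[𝕜] F} {x₀ : X} {M : ℝ}
    (hM : ∀ᶠ x in 𝓝 x₀, ‖T x‖ ≤ M) : IsClosed (continuousAtSubmodule T x₀ : Set E) := by
  let T' : {x // ‖T x‖ ≤ M} → E →L[𝕜] F := fun x => T x
  have hT' : Equicontinuous ((↑) ∘ T' : _ → E → F) :=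
    ((NormedSpace.equicontinuous_TFAE T').out 5 1).mp
      (⟨M, Subtype.prop⟩ : ∃ C, ∀ x, ‖T' x‖ ≤ C)
  have hrange : Set.range (Subtype.val : {x // ‖T x‖ ≤ M} → X) ∈ 𝓝 x₀ := by
    rwa [Subtype.range_coe_subtype]
  have hset : (continuousAtSubmodule T x₀ : Set E) =
      {g | Tendsto (fun x => T' x g) (comap Subtype.val (𝓝 x₀)) (𝓝 (T x₀ g))} :=
    Set.ext fun g => (tendsto_comap'_iff hrange).symm
  rw [hset]
  exact hT'.isClosed_setOfPred_tendsto (T x₀).continuous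

end OperatorFamilies

theorem exists_continuousLinearMap_apply_eq_intervalIntegral {E F : Type*}
    [NormedAddCommGroup E] [NormedSpace ℝ E] [CompleteSpace E]
    [NormedAddCommGroup F] [NormedSpace ℝ F] [CompleteSpace F]
    {S : ℝ → E →L[ℝ] F} (hS : ∀ f, Continuous fun s => S s f) (a b : ℝ) :
    ∃ L : E →L[ℝ] F, ∀ f, L f = ∫ s in a..b, S s f := by
  obtain ⟨M, hM⟩ := (isCompact_uIcc (a := a) (b := b)).exists_forall_opNorm_le hS
  let L : E →ₗ[ℝ] F :=
    { toFun := fun f => ∫ s in a..b, S s f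
      map_add' := fun f f' => by
        simp only [map_add]
        exact intervalIntegral.integral_add ((hS f).intervalIntegrable a b)
          ((hS f').intervalIntegrable a b)
      map_smul' := fun c f => by
        simp only [map_smul, RingHom.id_apply]
        exact intervalIntegral.integral_smul c _ }
  refine ⟨L.mkContinuous (M * |b - a|) fun f => ?_, fun _ => rfl⟩
  have hbound : ∀ s ∈ Set.uIoc a b, ‖S s f‖ ≤ M * ‖f‖ := fun s hs =>
    (S s).le_of_opNorm_le (hM s (Set.uIoc_subset_uIcc hs)) f
  calc ‖L f‖ ≤ M * ‖f‖ * |b - a| := intervalIntegral.norm_integral_le_of_norm_le_const hbound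
    _ = M * |b - a| * ‖f‖ := by ring

theorem eq_zero_of_forall_intervalIntegral_eq_zero {E : Type*} [NormedAddCommGroup E]
    [NormedSpace ℝ E] [CompleteSpace E] {φ : ℝ → E} (hφ : Continuous φ)
    (h : ∀ t > 0, ∫ s in (0:ℝ)..t, φ s = 0) : φ 0 = 0 := by
  have hderiv : HasDerivWithinAt (fun t => ∫ s in (0:ℝ)..t, φ s) (φ 0) (Set.Ioi 0) 0 :=
    (hφ.integral_hasStrictDerivAt 0 0).hasDerivAt.hasDerivWithinAt
  have hzero : HasDerivWithinAt (fun t => ∫ s in (0:ℝ)..t, φ s) 0 (Set.Ioi 0) 0 :=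
    (hasDerivWithinAt_const (0:ℝ) _ (0:E)).congr (fun t ht => h t ht)
      intervalIntegral.integral_same
  exact (uniqueDiffWithinAt_Ioi 0).eq_deriv _ hderiv hzero

theorem existsUnique_inner_eq {E : Type*} [NormedAddCommGroup E] [InnerProductSpace ℝ E]
    [CompleteSpace E] (ℓ : E →L[ℝ] ℝ) : ∃! k : E, ∀ f, ⟪k, f⟫ = ℓ f :=
  ⟨(InnerProductSpace.toDual ℝ E).symm ℓ, fun _ => InnerProductSpace.toDual_symm_apply,
    fun _ hk => (InnerProductSpace.toDual ℝ E).eq_symm_apply.mpr (ContinuousLinearMap.ext hk)⟩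

section Semigroup

variable {𝕜 E : Type*} [NontriviallyNormedField 𝕜] [NormedAddCommGroup E] [NormedSpace 𝕜 E]
  {T : ℝ≥0 → E →L[𝕜] E}

theorem NNReal.add_nndist_of_le {s t : ℝ≥0} (h : s ≤ t) : s + nndist s t = t := by
  rw [NNReal.nndist_eq, max_eq_right (by simp [tsub_eq_zero_of_le h]), add_tsub_cancel_of_le h]

theorem norm_semigroup_apply_sub_le (hadd : ∀ a b, T (a + b) = (T a).comp (T b)) (g : E)
    (s t : ℝ≥0) : ‖T s g - T t g‖ ≤ ‖T (min s t)‖ * ‖T (nndist s t) g - T 0 g‖ := by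
  wlog hst : s ≤ t generalizing s t
  · rw [norm_sub_rev, min_comm, nndist_comm]
    exact this t s (le_of_not_ge hst)
  calc ‖T s g - T t g‖ = ‖T s (T 0 g - T (nndist s t) g)‖ := by
        rw [map_sub, ← ContinuousLinearMap.comp_apply, ← hadd, add_zero,
          ← ContinuousLinearMap.comp_apply, ← hadd, NNReal.add_nndist_of_le hst]
    _ ≤ ‖T (min s t)‖ * ‖T (nndist s t) g - T 0 g‖ := by
        rw [min_eq_left hst, norm_sub_rev]
        exact (T s).le_opNorm _

theorem continuous_semigroup_apply_of_continuousAt_zero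
    (hadd : ∀ a b, T (a + b) = (T a).comp (T b)) (hbdd : ∀ t, ∃ M, ∀ s ≤ t, ‖T s‖ ≤ M)
    {g : E} (h0 : ContinuousAt (fun t => T t g) 0) : Continuous fun t => T t g := by
  refine continuous_iff_continuousAt.mpr fun x => ?_
  obtain ⟨M, hM⟩ := hbdd x
  have hdist : Tendsto (fun t => nndist t x) (𝓝 x) (𝓝 0) := by
    simpa using (continuous_id.nndist (continuous_const (y := x))).tendsto x
  have hlim : Tendsto (fun t => M * ‖T (nndist t x) g - T 0 g‖) (𝓝 x) (𝓝 0) := by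
    simpa using ((tendsto_iff_norm_sub_tendsto_zero.mp h0).comp hdist).const_mul M
  refine tendsto_iff_norm_sub_tendsto_zero.mpr (squeeze_zero (fun _ => norm_nonneg _)
    (fun t => ?_) hlim)
  exact (norm_semigroup_apply_sub_le hadd g t x).trans
    (mul_le_mul_of_nonneg_right (hM _ (min_le_right _ _)) (norm_nonneg _))

end Semigroup

section IntegratedSemigroup

variable {E : Type*} [NormedAddCommGroup E] [NormedSpace ℝ E] {S : ℝ≥0 → E →L[ℝ] E}

theorem intervalIntegral_semigroup_apply_semigroup_apply
    (hadd : ∀ a b, S (a + b) = (S a).comp (S b)) {t : ℝ} (ht : 0 ≤ t) (h : ℝ≥0) (f : E) :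
    ∫ s in (0:ℝ)..t, S s.toNNReal (S h f) = ∫ s in (h:ℝ)..t + h, S s.toNNReal f := by
  calc ∫ s in (0:ℝ)..t, S s.toNNReal (S h f) = ∫ s in (0:ℝ)..t, S (s + h).toNNReal f := by
        refine intervalIntegral.integral_congr fun s hs => ?_
        rw [Set.uIcc_of_le ht] at hs
        rw [Real.toNNReal_add hs.1 h.coe_nonneg, Real.toNNReal_coe, hadd,
          ContinuousLinearMap.comp_apply]
    _ = ∫ s in (h:ℝ)..t + h, S s.toNNReal f := by
        rw [intervalIntegral.integral_comp_add_right (fun s => S s.toNNReal f), zero_add]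

theorem norm_comp_semigroup_sub_comp_semigroup_zero_le
    (hadd : ∀ a b, S (a + b) = (S a).comp (S b)) (hcont : ∀ f, Continuous fun t => S t f)
    {t : ℝ} (ht : 0 ≤ t) {L : E →L[ℝ] E} (hL : ∀ f, L f = ∫ s in (0:ℝ)..t, S s.toNNReal f)
    (h : ℝ≥0) {M : ℝ} (hM : ∀ s : ℝ≥0, (s : ℝ) ≤ t + h → ‖S s‖ ≤ M) :
    ‖L.comp (S h) - L.comp (S 0)‖ ≤ 2 * M * h := by
  have hint : ∀ f a b, IntervalIntegrable (fun s : ℝ => S s.toNNReal f) volume a b :=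
    fun f a b => ((hcont f).comp continuous_real_toNNReal).intervalIntegrable a b
  have hpiece : ∀ f {a b : ℝ}, 0 ≤ a → a ≤ b → b ≤ t + h →
      ‖∫ s in a..b, S s.toNNReal f‖ ≤ M * ‖f‖ * (b - a) := by
    intro f a b ha hab hb
    have := intervalIntegral.norm_integral_le_of_norm_le_const (a := a) (b := b)
      (f := fun s => S s.toNNReal f) (C := M * ‖f‖) fun s hs => by
        rw [Set.uIoc_of_le hab] at hs
        refine (S _).le_of_opNorm_le (hM _ ?_) f
        rw [Real.coe_toNNReal _ (ha.trans hs.1.le)]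
        exact hs.2.trans hb
    rwa [abs_of_nonneg (sub_nonneg.mpr hab)] at this
  have hM0 : 0 ≤ M := (norm_nonneg _).trans (hM 0 (by positivity))
  refine ContinuousLinearMap.opNorm_le_bound _ (by positivity) fun f => ?_
  rw [sub_apply, ContinuousLinearMap.comp_apply, ContinuousLinearMap.comp_apply, hL, hL,
    intervalIntegral_semigroup_apply_semigroup_apply hadd ht,
    intervalIntegral_semigroup_apply_semigroup_apply hadd ht, NNReal.coe_zero, add_zero,
    intervalIntegral.integral_interval_sub_interval_comm' (hint _ _ _) (hint _ _ _) (hint _ _ _)]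
  calc ‖(∫ s in t..t + h, S s.toNNReal f) - ∫ s in (0:ℝ)..h, S s.toNNReal f‖
      ≤ M * ‖f‖ * (t + h - t) + M * ‖f‖ * (h - 0) :=
        (norm_sub_le _ _).trans (add_le_add (hpiece f ht (by simp) le_rfl)
          (hpiece f le_rfl h.coe_nonneg (by linarith)))
    _ = 2 * M * h * ‖f‖ := by ring

end IntegratedSemigroup

section AdjointSemigroup

open ContinuousLinearMap

variable {E : Type*} [NormedAddCommGroup E] [InnerProductSpace ℝ E] [CompleteSpace E]
  {S : ℝ≥0 → E →L[ℝ] E}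

theorem continuousAt_zero_adjoint_semigroup_apply_adjoint_intervalIntegral
    (hadd : ∀ a b, S (a + b) = (S a).comp (S b)) (hcont : ∀ f, Continuous fun t => S t f)
    {t : ℝ} (ht : 0 ≤ t) {L : E →L[ℝ] E} (hL : ∀ f, L f = ∫ s in (0:ℝ)..t, S s.toNNReal f)
    (g : E) : ContinuousAt (fun h => adjoint (S h) (adjoint L g)) 0 := by
  obtain ⟨M, hM⟩ := exists_forall_le_opNorm_le hcont (t + 1).toNNReal
  have hbound : ∀ h : ℝ≥0, h ≤ 1 →
      ‖adjoint (S h) (adjoint L g) - adjoint (S 0) (adjoint L g)‖ ≤ 2 * M * h * ‖g‖ := by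
    intro h h1
    have hdiff := norm_comp_semigroup_sub_comp_semigroup_zero_le hadd hcont ht hL h fun s hs =>
      hM s ((Real.le_toNNReal_iff_coe_le (by positivity)).mpr
        (hs.trans (by gcongr; exact_mod_cast h1)))
    rw [← comp_apply, ← comp_apply, ← adjoint_comp, ← adjoint_comp, ← sub_apply, ← map_sub]
    calc ‖adjoint (L.comp (S h) - L.comp (S 0)) g‖
        ≤ ‖adjoint (L.comp (S h) - L.comp (S 0))‖ * ‖g‖ := le_opNorm _ _
      _ ≤ 2 * M * h * ‖g‖ := by
        rw [LinearIsometryEquiv.norm_map]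
        exact mul_le_mul_of_nonneg_right hdiff (norm_nonneg g)
  have hlim : Tendsto (fun h : ℝ≥0 => 2 * M * h * ‖g‖) (𝓝 0) (𝓝 0) := by
    have : Continuous fun h : ℝ≥0 => 2 * M * h * ‖g‖ := by fun_prop
    simpa using this.tendsto 0
  refine tendsto_iff_norm_sub_tendsto_zero.mpr
    (squeeze_zero' (Eventually.of_forall fun _ => norm_nonneg _) ?_ hlim)
  filter_upwards [Iic_mem_nhds zero_lt_one] with h h1 using hbound h h1

theorem continuous_adjoint_semigroup_apply (hadd : ∀ a b, S (a + b) = (S a).comp (S b))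
    (hcont : ∀ f, Continuous fun t => S t f) (g : E) :
    Continuous fun t => adjoint (S t) g := by
  have hTadd : ∀ a b, adjoint (S (a + b)) = (adjoint (S a)).comp (adjoint (S b)) := by
    intro a b
    rw [add_comm, hadd, adjoint_comp]
  have hTbdd : ∀ t, ∃ M, ∀ s ≤ t, ‖adjoint (S s)‖ ≤ M := by
    intro t
    obtain ⟨M, hM⟩ := exists_forall_le_opNorm_le hcont t
    exact ⟨M, fun s hs => (LinearIsometryEquiv.norm_map _ _).trans_le (hM s hs)⟩
  refine continuous_semigroup_apply_of_continuousAt_zero hTadd hTbdd ?_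
  let F := continuousAtSubmodule (fun t => adjoint (S t)) 0
  obtain ⟨M, hM⟩ := hTbdd 1
  have hnear : ∀ᶠ t in 𝓝 (0 : ℝ≥0), ‖adjoint (S t)‖ ≤ M :=
    Filter.mem_of_superset (Iic_mem_nhds zero_lt_one) hM
  have : CompleteSpace F := (isClosed_continuousAtSubmodule hnear).completeSpace_coe
  have hmem : adjoint (S 0) g ∈ F := by
    rw [← Submodule.orthogonal_orthogonal F, Submodule.mem_orthogonal]
    intro w hw
    rw [real_inner_comm, adjoint_inner_left, ← Real.toNNReal_zero]
    refine eq_zero_of_forall_intervalIntegral_eq_zero (φ := fun s : ℝ => ⟪g, S s.toNNReal w⟫)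
      (continuous_const.inner ((hcont w).comp continuous_real_toNNReal)) fun t ht => ?_
    obtain ⟨L, hL⟩ := exists_continuousLinearMap_apply_eq_intervalIntegral
      (fun f => (hcont f).comp continuous_real_toNNReal) 0 t
    have hLF : adjoint L g ∈ F :=
      continuousAt_zero_adjoint_semigroup_apply_adjoint_intervalIntegral hadd hcont ht.le hL g
    calc ∫ s in (0:ℝ)..t, ⟪g, S s.toNNReal w⟫ = ⟪g, L w⟫ := by
          rw [hL]
          exact (innerSL ℝ g).intervalIntegral_comp_comm
            (((hcont w).comp continuous_real_toNNReal).intervalIntegrable 0 t)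
      _ = ⟪adjoint L g, w⟫ := (adjoint_inner_left L w g).symm
      _ = 0 := Submodule.inner_right_of_mem_orthogonal hLF hw
  have hcomp : ∀ t, adjoint (S t) (adjoint (S 0) g) = adjoint (S t) g := fun t => by
    rw [← comp_apply, ← hTadd, add_zero]
  simpa only [hcomp] using mem_continuousAtSubmodule.mp hmem

end AdjointSemigroup

theorem stmt3_general
    {H : Type*} [NormedAddCommGroup H] [InnerProductSpace ℝ H]
    [CompleteSpace H]
    (ι : H →ₗ[ℝ] (ℝ≥0 → ℝ))
    (hH1 : Continuous fun f : H => ι f 0)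
    (S : ℝ≥0 → H →L[ℝ] H)
    (hshift : ∀ (h : ℝ≥0) (f : H) (x : ℝ≥0), ι (S h f) x = ι f (x + h))
    (hSadd : ∀ a b : ℝ≥0, S (a + b) = (S a).comp (S b))
    (hScont : ∀ f : H, Continuous fun h : ℝ≥0 => S h f) :
    -- δ_x is continuous (it is linear since ι is linear)
    (∀ x : ℝ≥0, Continuous fun f : H => ι f x) ∧
    -- existence and uniqueness of the Riesz representative k_x
    (∀ x : ℝ≥0, ∃! k : H, ∀ f : H, ⟪k, f⟫ = ι f x) ∧
    -- x ↦ k_x is continuous and locally Bochner integrable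
    (∀ k : ℝ≥0 → H, (∀ (x : ℝ≥0) (f : H), ⟪k x, f⟫ = ι f x) →
      Continuous k ∧
      ∀ x₁ : ℝ, IntegrableOn (fun x : ℝ => k x.toNNReal) (Set.Icc 0 x₁)) := by
  have heval : ∀ x f, ι f x = ι (S x f) 0 := fun x f => by rw [hshift, zero_add]
  have hδ : ∀ x, Continuous fun f : H => ι f x := fun x =>
    (hH1.comp (S x).continuous).congr fun f => (heval x f).symm
  refine ⟨hδ, fun x => existsUnique_inner_eq ⟨(LinearMap.proj x).comp ι, hδ x⟩, fun k hk => ?_⟩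
  have hk_eq : ∀ x, k x = ContinuousLinearMap.adjoint (S x) (k 0) := fun x =>
    ext_inner_right ℝ fun f => by
      rw [hk, heval, ContinuousLinearMap.adjoint_inner_left, hk]
  have hkc : Continuous k := by
    simpa only [← hk_eq] using continuous_adjoint_semigroup_apply hSadd hScont (k 0)
  exact ⟨hkc, fun x₁ => (hkc.comp continuous_real_toNNReal).integrableOn_Icc⟩

theorem stmt3
    {H : Type*} [NormedAddCommGroup H] [InnerProductSpace ℝ H]
    [CompleteSpace H] [TopologicalSpace.SeparableSpace H]
    (ι : H →ₗ[ℝ] (ℝ≥0 → ℝ)) (hι : Function.Injective ι)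
    (hH1 : Continuous fun f : H => ι f 0)
    (S : ℝ≥0 → H →L[ℝ] H)
    (hshift : ∀ (h : ℝ≥0) (f : H) (x : ℝ≥0), ι (S h f) x = ι f (x + h))
    (hS0 : S 0 = ContinuousLinearMap.id ℝ H)
    (hSadd : ∀ a b : ℝ≥0, S (a + b) = (S a).comp (S b))
    (hScont : ∀ f : H, Continuous fun h : ℝ≥0 => S h f) :
    -- δ_x is continuous (it is linear since ι is linear)
    (∀ x : ℝ≥0, Continuous fun f : H => ι f x) ∧
    -- existence and uniqueness of the Riesz representative k_x
    (∀ x : ℝ≥0, ∃! k : H, ∀ f : H, ⟪k, f⟫ = ι f x) ∧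
    -- x ↦ k_x is continuous and locally Bochner integrable
    (∀ k : ℝ≥0 → H, (∀ (x : ℝ≥0) (f : H), ⟪k x, f⟫ = ι f x) →
      Continuous k ∧
      ∀ x₁ : ℝ, IntegrableOn (fun x : ℝ => k x.toNNReal) (Set.Icc 0 x₁)) :=
  stmt3_general ι hH1 S hshift hSadd hScont
end

section
/- The map H × ℝ≥0 → ℝ, (f, x) ↦ (Ψf)(x), is jointly continuous, and so is the map (f, x) ↦ ∂_x(Ψf)(x) = (ι f)(x) · exp(−∫₀ˣ (ι f)(s) ds). -/
/-!
Shift invariance gives `(ι f)(x) = (ι (S_x f))(0)`, so joint continuity of `(f, x) ↦ (ι f)(x)`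
reduces to joint continuity of `(f, x) ↦ S_x f`. The latter holds for any strongly continuous
family of operators on a Banach space: by Banach–Steinhaus the operator norms are bounded on
compact time intervals. Both maps of the theorem are then built from `(f, x) ↦ (ι f)(x)` and
its parametric primitive, which is continuous as well.
-/

open scoped NNReal
open Filter Topology MeasureTheory

section StronglyContinuous

variable {𝕜 X E F : Type*} [NontriviallyNormedField 𝕜] [TopologicalSpace X]
  [NormedAddCommGroup E] [NormedSpace 𝕜 E] [CompleteSpace E]
  [NormedAddCommGroup F] [NormedSpace 𝕜 F] {S : X → E →L[𝕜] F}

theorem IsCompact.exists_bound_opNorm_of_continuous_apply {K : Set X} (hK : IsCompact K)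
    (hS : ∀ f, Continuous fun x => S x f) : ∃ C, ∀ x ∈ K, ‖S x‖ ≤ C := by
  obtain ⟨C, hC⟩ := banach_steinhaus (g := fun x : K => S x) fun f =>
    let ⟨M, hM⟩ := hK.exists_bound_of_continuousOn (hS f).continuousOn
    ⟨M, fun x => hM x x.2⟩
  exact ⟨C, fun x hx => hC ⟨x, hx⟩⟩

theorem continuous_uncurry_apply_of_continuous_apply [WeaklyLocallyCompactSpace X]
    (hS : ∀ f, Continuous fun x => S x f) : Continuous fun p : E × X => S p.2 p.1 := by
  rw [continuous_iff_continuousAt]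
  rintro ⟨f₀, x₀⟩
  obtain ⟨K, hK, hKx₀⟩ := exists_compact_mem_nhds x₀
  obtain ⟨C, hC⟩ := hK.exists_bound_opNorm_of_continuous_apply hS
  have hbound : ∀ᶠ p : E × X in 𝓝 (f₀, x₀),
      ‖S p.2 p.1 - S x₀ f₀‖ ≤ C * ‖p.1 - f₀‖ + ‖S p.2 f₀ - S x₀ f₀‖ := by
    filter_upwards [continuous_snd.continuousAt.preimage_mem_nhds hKx₀] with p hp
    calc ‖S p.2 p.1 - S x₀ f₀‖
        = ‖S p.2 (p.1 - f₀) + (S p.2 f₀ - S x₀ f₀)‖ := by rw [map_sub]; abel_nf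
      _ ≤ ‖S p.2 (p.1 - f₀)‖ + ‖S p.2 f₀ - S x₀ f₀‖ := norm_add_le _ _
      _ ≤ C * ‖p.1 - f₀‖ + ‖S p.2 f₀ - S x₀ f₀‖ := by
        gcongr
        exact (S p.2).le_of_opNorm_le (hC p.2 hp) _
  have hlim : Tendsto (fun p : E × X => C * ‖p.1 - f₀‖ + ‖S p.2 f₀ - S x₀ f₀‖)
      (𝓝 (f₀, x₀)) (𝓝 0) := by
    have hcont : Continuous fun p : E × X => C * ‖p.1 - f₀‖ + ‖S p.2 f₀ - S x₀ f₀‖ :=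
      (continuous_const.mul (continuous_fst.sub continuous_const).norm).add
        (((hS f₀).comp continuous_snd).sub continuous_const).norm
    simpa using hcont.tendsto (f₀, x₀)
  exact tendsto_sub_nhds_zero_iff.1 (squeeze_zero_norm' hbound hlim)

end StronglyContinuous

theorem continuous_uncurry_of_eval_zero_of_shift {H : Type*} [TopologicalSpace H]
    (u : H → ℝ≥0 → ℝ) (T : ℝ≥0 → H → H) (hu : Continuous fun f => u f 0)
    (hshift : ∀ h f x, u (T h f) x = u f (x + h))
    (hT : Continuous fun p : H × ℝ≥0 => T p.2 p.1) :
    Continuous fun p : H × ℝ≥0 => u p.1 p.2 := by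
  have heq : (fun p : H × ℝ≥0 => u p.1 p.2) = fun p => u (T p.2 p.1) 0 := by
    ext p
    simp [hshift]
  exact heq ▸ hu.comp hT

theorem continuous_intervalIntegral_toNNReal {X : Type*} [TopologicalSpace X]
    {g : X → ℝ≥0 → ℝ} (hg : Continuous fun p : X × ℝ≥0 => g p.1 p.2) :
    Continuous fun p : X × ℝ≥0 => ∫ s in (0:ℝ)..(p.2:ℝ), g p.1 s.toNNReal := by
  have hprim := intervalIntegral.continuous_parametric_primitive_of_continuous
    (μ := volume) (a₀ := 0) (f := fun x (s : ℝ) => g x s.toNNReal)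
    (hg.comp (continuous_fst.prodMk (continuous_real_toNNReal.comp continuous_snd)))
  exact hprim.comp (continuous_fst.prodMk (NNReal.continuous_coe.comp continuous_snd))

theorem stmt6_general
    {H : Type*} [NormedAddCommGroup H] [InnerProductSpace ℝ H]
    [CompleteSpace H]
    (ι : H →ₗ[ℝ] (ℝ≥0 → ℝ))
    (hH1 : Continuous fun f : H => ι f 0)
    (S : ℝ≥0 → H →L[ℝ] H)
    (hshift : ∀ (h : ℝ≥0) (f : H) (x : ℝ≥0), ι (S h f) x = ι f (x + h))
    (hScont : ∀ f : H, Continuous fun h : ℝ≥0 => S h f) :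
    -- (f, x) ↦ (Ψf)(x) is jointly continuous
    Continuous (fun p : H × ℝ≥0 =>
      1 - Real.exp (-∫ s in (0:ℝ)..(p.2:ℝ), ι p.1 s.toNNReal)) ∧
    -- (f, x) ↦ ∂_x(Ψf)(x) = (ι f)(x) · exp(−∫₀ˣ (ι f)(s) ds) is jointly continuous
    Continuous (fun p : H × ℝ≥0 =>
      ι p.1 p.2 * Real.exp (-∫ s in (0:ℝ)..(p.2:ℝ), ι p.1 s.toNNReal)) := by
  have hι : Continuous fun p : H × ℝ≥0 => ι p.1 p.2 :=
    continuous_uncurry_of_eval_zero_of_shift ι (fun h => S h) hH1 hshift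
      (continuous_uncurry_apply_of_continuous_apply hScont)
  have hexp : Continuous fun p : H × ℝ≥0 =>
      Real.exp (-∫ s in (0:ℝ)..(p.2:ℝ), ι p.1 s.toNNReal) :=
    (continuous_intervalIntegral_toNNReal hι).neg.rexp
  exact ⟨continuous_const.sub hexp, hι.mul hexp⟩

theorem stmt6
    {H : Type*} [NormedAddCommGroup H] [InnerProductSpace ℝ H]
    [CompleteSpace H] [TopologicalSpace.SeparableSpace H]
    (ι : H →ₗ[ℝ] (ℝ≥0 → ℝ)) (hι : Function.Injective ι)
    (hH1 : Continuous fun f : H => ι f 0)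
    (S : ℝ≥0 → H →L[ℝ] H)
    (hshift : ∀ (h : ℝ≥0) (f : H) (x : ℝ≥0), ι (S h f) x = ι f (x + h))
    (hS0 : S 0 = ContinuousLinearMap.id ℝ H)
    (hSadd : ∀ a b : ℝ≥0, S (a + b) = (S a).comp (S b))
    (hScont : ∀ f : H, Continuous fun h : ℝ≥0 => S h f) :
    -- (f, x) ↦ (Ψf)(x) is jointly continuous
    Continuous (fun p : H × ℝ≥0 =>
      1 - Real.exp (-∫ s in (0:ℝ)..(p.2:ℝ), ι p.1 s.toNNReal)) ∧
    -- (f, x) ↦ ∂_x(Ψf)(x) = (ι f)(x) · exp(−∫₀ˣ (ι f)(s) ds) is jointly continuous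
    Continuous (fun p : H × ℝ≥0 =>
      ι p.1 p.2 * Real.exp (-∫ s in (0:ℝ)..(p.2:ℝ), ι p.1 s.toNNReal)) :=
  stmt6_general ι hH1 S hshift hScont
end

section
/- Let V be a finite-dimensional linear subspace of the real vector space of all functions ℝ≥0 → ℝ, and let g : ℝ≥0 → ℝ be continuous such that the pointwise power gⁿ belongs to V for every integer n ≥ 1. Then g is constant. -/
open scoped NNReal
open Polynomial

theorem stmt9
    (V : Submodule ℝ (ℝ≥0 → ℝ)) (hV : FiniteDimensional ℝ V)
    (g : ℝ≥0 → ℝ) (hg : Continuous g)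
    (hpow : ∀ n : ℕ, 1 ≤ n → (fun x : ℝ≥0 => g x ^ n) ∈ V) :
    ∃ cst : ℝ, ∀ x : ℝ≥0, g x = cst := by
  by_contra h
  push_neg at h
  obtain ⟨u, hu⟩ := h (g 0)
  set d := Module.finrank ℝ V with hd
  -- the range of g contains an interval, hence infinitely many nonzero values
  have hinf : (Set.range g \ {(0:ℝ)}).Infinite := by
    have h1 : (Set.uIcc (g 0) (g u)).Infinite := by
      rw [Set.uIcc]
      exact Set.Icc_infinite (min_lt_max.mpr (Ne.symm hu))
    have h2 : Set.uIcc (g 0) (g u) ⊆ Set.range g := by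
      intro y hy
      obtain ⟨x, -, hx⟩ := intermediate_value_uIcc (hg.continuousOn) hy
      exact ⟨x, hx⟩
    exact (h1.mono h2).diff (Set.finite_singleton 0)
  obtain ⟨t, hts, htc⟩ := hinf.exists_subset_card_eq (d + 1)
  -- the family g^1, ..., g^(d+1) is linearly independent in V
  have li : LinearIndependent ℝ
      (fun j : Fin (d + 1) => (⟨fun x => g x ^ ((j : ℕ) + 1),
        hpow ((j : ℕ) + 1) (Nat.succ_le_succ (Nat.zero_le _))⟩ : V)) := by
    rw [Fintype.linearIndependent_iff]
    intro c hc i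
    have hc' : ∀ x : ℝ≥0, ∑ j : Fin (d + 1), c j * g x ^ ((j : ℕ) + 1) = 0 := by
      intro x
      have := congrArg (fun v : V => (v : ℝ≥0 → ℝ) x) hc
      simpa [Submodule.coe_sum, Finset.sum_apply] using this
    set q : ℝ[X] := ∑ j : Fin (d + 1), C (c j) * X ^ (j : ℕ) with hq
    have hqe : ∀ a ∈ t, q.eval a = 0 := by
      intro a ha
      obtain ⟨x, hx⟩ := (hts ha).1
      have ha0 : a ≠ 0 := (hts ha).2
      have hmul : g x * q.eval (g x) = 0 := by
        have h0 := hc' x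
        rw [hq]
        simp only [eval_finset_sum, eval_mul, eval_C, eval_pow, eval_X, Finset.mul_sum]
        rw [← h0]
        apply Finset.sum_congr rfl
        intro j _
        ring
      rw [hx] at hmul
      rcases mul_eq_zero.mp hmul with h' | h'
      · exact absurd h' ha0
      · exact h'
    have hdeg : q.natDegree < t.card := by
      rw [htc]
      refine Nat.lt_succ_of_le (natDegree_sum_le_of_forall_le _ _ ?_)
      intro j _
      calc (C (c j) * X ^ (j : ℕ)).natDegree ≤ (X ^ (j : ℕ) : ℝ[X]).natDegree :=
            natDegree_C_mul_le _ _
        _ ≤ d := by rw [natDegree_X_pow]; omega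
    have hq0 : q = 0 := eq_zero_of_natDegree_lt_card_of_eval_eq_zero' q t hqe hdeg
    have hco : q.coeff (i : ℕ) = c i := by
      rw [hq]
      rw [Polynomial.finset_sum_coeff]
      rw [Finset.sum_eq_single i]
      · simp
      · intro j _ hji
        rw [coeff_C_mul, coeff_X_pow]; rw [ if_neg (fun hh => hji (Fin.val_injective hh.symm)), mul_zero]
      · simp
    rw [hq0] at hco
    simpa using hco.symm
  have hcard := li.fintype_card_le_finrank
  simp only [Fintype.card_fin, ← hd] at hcard
  omega
end

section
/- Let V be a finite-dimensional linear subspace of the real vector space of all functions ℝ≥0 → ℝ, and let g : ℝ≥0 → ℝ be a function such that the pointwise power gⁿ belongs to V for every integer n ≥ 1. Then the range of g is a finite set. -/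
/-!
A linear relation among the powers of `g` is a polynomial vanishing on the range of `g`.
If that range is infinite, the polynomial is zero, so all powers of `g` are linearly independent,
and infinitely many of them cannot lie in a finite-dimensional space.
-/

open scoped NNReal
open Polynomial

section

variable {α R : Type*} [CommRing R] [IsDomain R] {g : α → R}

theorem Polynomial.aeval_pi_injective_of_infinite_range (hg : (Set.range g).Infinite) :
    Function.Injective (aeval (R := R) g) := by
  refine (injective_iff_map_eq_zero _).mpr fun p hp => p.eq_zero_of_infinite_isRoot (hg.mono ?_)
  rintro _ ⟨x, rfl⟩
  simpa [aeval_pi_apply₂] using congrFun hp x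

theorem linearIndependent_pow_of_infinite_range (hg : (Set.range g).Infinite) :
    LinearIndependent R (fun n : ℕ => g ^ n) := by
  have := (basisMonomials R).linearIndependent.map' (aeval g).toLinearMap
    (LinearMap.ker_eq_bot.mpr (aeval_pi_injective_of_infinite_range hg))
  simpa [coe_basisMonomials, ← X_pow_eq_monomial, Function.comp_def] using this

end

theorem stmt10
    (V : Submodule ℝ (ℝ≥0 → ℝ)) (hV : FiniteDimensional ℝ V)
    (g : ℝ≥0 → ℝ)
    (hpow : ∀ n : ℕ, 1 ≤ n → (fun x : ℝ≥0 => g x ^ n) ∈ V) :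
    (Set.range g).Finite := by
  by_contra hinf
  let powers : ℕ → V := fun n => ⟨g ^ (n + 1), hpow (n + 1) n.succ_pos⟩
  have hli : LinearIndependent ℝ powers := LinearIndependent.of_comp V.subtype <|
    (linearIndependent_pow_of_infinite_range hinf).comp (· + 1) (add_left_injective 1)
  have : Finite ℕ := hli.finite
  exact not_finite ℕ
end

section
/- Let U ⊆ ℝ^d be open and connected, and let c : ℝ≥0 → ℝ and u : ℝ≥0 → ℝ^d be twice continuously differentiable functions such that c(x) + ⟨z, u(x)⟩ < 1 for all x ≥ 0 and all z ∈ U. Let M be the linear-rational family of functions M := { x ↦ (c′(x) + ⟨z, u′(x)⟩) / (1 − c(x) − ⟨z, u(x)⟩) : z ∈ U }. Let h₀, h₁ : ℝ≥0 → ℝ be continuous functions such that for every t ≥ 0 the function h₀ + t·h₁ belongs to M. Then h₁ is identically zero. -/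
open scoped RealInnerProductSpace

/-!
Let `D_z = 1 - c - ⟪z, u⟫` and let `z_t ∈ U` represent `h₀ + t h₁`. Then
`D_{z_t}' = -(h₀ + t h₁) D_{z_t}`, so with `q = D_{z_1} / D_{z_0}` each `D_{z_n}` is a constant
multiple of `D_{z_0} q ^ n`. The `d + 2` points `z_0, …, z_{d+1}` of `ℝ^d` are affinely dependent,
and `D_z(x)` is affine in `z`, so some nonzero polynomial vanishes on all values of `q`. Being
continuous on the connected set `[0, ∞)`, `q` is constant, hence `h₁ = -q' / q = 0`.
-/

open Set Polynomial

theorem Convex.is_const_of_hasDerivWithinAt_zero {E : Type*} [NormedAddCommGroup E]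
    [NormedSpace ℝ E] {s : Set ℝ} (hs : Convex ℝ s) {f : ℝ → E}
    (hf : ∀ x ∈ s, HasDerivWithinAt f 0 s x) {x y : ℝ} (hx : x ∈ s) (hy : y ∈ s) :
    f x = f y := by
  have := hs.norm_image_sub_le_of_norm_hasDerivWithin_le hf (fun _ _ => norm_zero.le) hy hx
  rwa [zero_mul, norm_le_zero_iff, sub_eq_zero] at this

section LogDeriv

variable {f g : ℝ → ℝ} {a b : ℝ} {s : Set ℝ} {x : ℝ}

theorem HasDerivWithinAt.div_of_logDeriv (hf : HasDerivWithinAt f (a * f x) s x)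
    (hg : HasDerivWithinAt g (b * g x) s x) (hgx : g x ≠ 0) :
    HasDerivWithinAt (fun y => f y / g y) ((a - b) * (f x / g x)) s x := by
  refine (hf.fun_div hg hgx).congr_deriv ?_
  field_simp

theorem HasDerivWithinAt.pow_of_logDeriv (hg : HasDerivWithinAt g (b * g x) s x) (n : ℕ) :
    HasDerivWithinAt (fun y => g y ^ n) (n * b * g x ^ n) s x := by
  refine (hg.fun_pow n).congr_deriv ?_
  rcases n with _ | n
  · simp
  · rw [Nat.add_sub_cancel, pow_succ]
    push_cast
    ring

end LogDeriv

theorem Convex.eq_mul_div_pow_of_logDeriv_affine {s : Set ℝ} (hs : Convex ℝ s)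
    {D : ℕ → ℝ → ℝ} {a b : ℝ → ℝ}
    (hD : ∀ n : ℕ, ∀ x ∈ s, HasDerivWithinAt (D n) ((a x + n * b x) * D n x) s x)
    (hD₀ : ∀ x ∈ s, D 0 x ≠ 0) (hD₁ : ∀ x ∈ s, D 1 x ≠ 0) (n : ℕ) {x y : ℝ}
    (hx : x ∈ s) (hy : y ∈ s) :
    D n x = D n y / D 0 y / (D 1 y / D 0 y) ^ n * D 0 x * (D 1 x / D 0 x) ^ n := by
  have hratio : ∀ k : ℕ, ∀ x ∈ s,
      HasDerivWithinAt (fun y => D k y / D 0 y) (k * b x * (D k x / D 0 x)) s x := by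
    intro k x hx
    refine ((hD k x hx).div_of_logDeriv (hD 0 x hx) (hD₀ x hx)).congr_deriv ?_
    push_cast
    ring
  have hq : ∀ x ∈ s, HasDerivWithinAt (fun y => D 1 y / D 0 y) (b x * (D 1 x / D 0 x)) s x := by
    simpa using hratio 1
  have hq₀ : ∀ x ∈ s, D 1 x / D 0 x ≠ 0 := fun x hx => div_ne_zero (hD₁ x hx) (hD₀ x hx)
  have hconst := hs.is_const_of_hasDerivWithinAt_zero
    (f := fun x => D n x / D 0 x / (D 1 x / D 0 x) ^ n) (fun x hx =>
      ((hratio n x hx).div_of_logDeriv ((hq x hx).pow_of_logDeriv n)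
        (pow_ne_zero _ (hq₀ x hx))).congr_deriv (by ring)) hy hx
  rw [hconst]
  field_simp [hD₀ x hx, hq₀ x hx]

theorem IsPreconnected.eq_of_sum_mul_pow_eq_zero {X K : Type*} [TopologicalSpace X] [Field K]
    [TopologicalSpace K] [T1Space K] {s : Set X} (hs : IsPreconnected s) {r : X → K}
    (hr : ContinuousOn r s) {n : ℕ} {a : Fin n → K} (ha : a ≠ 0)
    (hroot : ∀ x ∈ s, ∑ i, a i * r x ^ (i : ℕ) = 0) {x y : X} (hx : x ∈ s) (hy : y ∈ s) :
    r x = r y := by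
  classical
  have hP : ofFn n a ≠ 0 := by
    rwa [Ne, ← (ofFn n).map_zero, (injective_ofFn n).eq_iff]
  have hsub : r '' s ⊆ {t | (ofFn n a).IsRoot t} := by
    rintro _ ⟨x, hx, rfl⟩
    simpa [ofFn_eq_sum_monomial, eval_finsetSum] using hroot x hx
  by_contra hne
  exact (hs.image r hr).infinite_of_nontrivial
    ⟨r x, mem_image_of_mem r hx, r y, mem_image_of_mem r hy, hne⟩
    ((finite_setOfPred_isRoot hP).subset hsub)

theorem exists_affine_dependence {k V ι : Type*} [Field k] [AddCommGroup V] [Module k V]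
    [FiniteDimensional k V] [Fintype ι] (p : ι → V)
    (hcard : Module.finrank k V + 1 < Fintype.card ι) :
    ∃ w : ι → k, ∑ i, w i = 0 ∧ ∑ i, w i • p i = 0 ∧ w ≠ 0 := by
  have hdep : ¬ AffineIndependent k p := fun hp =>
    (hp.card_le_finrank_succ.trans (Nat.add_le_add_right (Submodule.finrank_le _) 1)).not_gt hcard
  contrapose! hdep
  rw [affineIndependent_iff_of_fintype]
  intro w hw hwp
  rw [Finset.univ.weightedVSub_eq_linear_combination hw] at hwp
  exact congrFun (hdep w hw hwp)

theorem HasDerivWithinAt.eq_zero_of_mul_of_const {q : ℝ → ℝ} {b : ℝ} {s : Set ℝ} {x : ℝ}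
    (hq : HasDerivWithinAt q (b * q x) s x) (hconst : ∀ y ∈ s, q y = q x)
    (hs : UniqueDiffWithinAt ℝ s x) (hqx : q x ≠ 0) : b = 0 := by
  have hzero : HasDerivWithinAt q 0 s x := (hasDerivWithinAt_const x s (q x)).congr hconst rfl
  exact (mul_eq_zero.mp (hs.eq_deriv s hq hzero)).resolve_right hqx

theorem Convex.eq_zero_of_sum_mul_eq_zero_of_logDeriv_affine {s : Set ℝ} (hs : Convex ℝ s)
    (hs' : UniqueDiffOn ℝ s) {D : ℕ → ℝ → ℝ} {a b : ℝ → ℝ}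
    (hD : ∀ n : ℕ, ∀ x ∈ s, HasDerivWithinAt (D n) ((a x + n * b x) * D n x) s x)
    (hD₀ : ∀ n, ∀ x ∈ s, D n x ≠ 0) {N : ℕ} {w : Fin N → ℝ} (hw : w ≠ 0)
    (hsum : ∀ x ∈ s, ∑ i, w i * D i x = 0) {x : ℝ} (hx : x ∈ s) : b x = 0 := by
  set q : ℝ → ℝ := fun y => D 1 y / D 0 y
  set β : ℕ → ℝ := fun n => D n x / D 0 x / q x ^ n
  have hq₀ : ∀ y ∈ s, q y ≠ 0 := fun y hy => div_ne_zero (hD₀ 1 y hy) (hD₀ 0 y hy)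
  have hq : ∀ y ∈ s, HasDerivWithinAt q (b y * q y) s y := fun y hy =>
    ((hD 1 y hy).div_of_logDeriv (hD 0 y hy) (hD₀ 0 y hy)).congr_deriv (by simp [q])
  have hroot : ∀ y ∈ s, ∑ i, w i * β i * q y ^ (i : ℕ) = 0 := by
    intro y hy
    have hfactor : D 0 y * ∑ i, w i * β i * q y ^ (i : ℕ) = 0 := by
      rw [Finset.mul_sum, ← hsum y hy]
      refine Finset.sum_congr rfl fun i _ => ?_
      rw [hs.eq_mul_div_pow_of_logDeriv_affine hD (hD₀ 0) (hD₀ 1) i hy hx]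
      ring
    exact (mul_eq_zero.mp hfactor).resolve_left (hD₀ 0 y hy)
  obtain ⟨i₀, hi₀⟩ := Function.ne_iff.mp hw
  have hβ : β i₀ ≠ 0 :=
    div_ne_zero (div_ne_zero (hD₀ i₀ x hx) (hD₀ 0 x hx)) (pow_ne_zero _ (hq₀ x hx))
  have hqconst : ∀ y ∈ s, q y = q x := fun y hy =>
    hs.isPreconnected.eq_of_sum_mul_pow_eq_zero
      (fun y hy => (hq y hy).continuousWithinAt)
      (Function.ne_iff.mpr ⟨i₀, mul_ne_zero hi₀ hβ⟩) hroot hy hx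
  exact (hq x hx).eq_zero_of_mul_of_const hqconst (hs' x hx) (hq₀ x hx)

section Denominator

variable {E : Type*} [NormedAddCommGroup E] [InnerProductSpace ℝ E]

theorem sum_mul_sub_inner_eq_zero {ι : Type*} (t : Finset ι) {w : ι → ℝ} {z : ι → E}
    (hw : ∑ i ∈ t, w i = 0) (hwz : ∑ i ∈ t, w i • z i = 0) (a : ℝ) (v : E) :
    ∑ i ∈ t, w i * (a - ⟪z i, v⟫) = 0 := by
  simp only [mul_sub, Finset.sum_sub_distrib, ← Finset.sum_mul, hw, ← real_inner_smul_left,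
    ← sum_inner, hwz, inner_zero_left]
  ring

theorem hasDerivWithinAt_one_sub_sub_inner_of_eq_div {c : ℝ → ℝ} {u : ℝ → E} {s : Set ℝ}
    {x h : ℝ} {z : E} (hc : DifferentiableWithinAt ℝ c s x) (hu : DifferentiableWithinAt ℝ u s x)
    (hne : 1 - c x - ⟪z, u x⟫ ≠ 0)
    (hh : h = (derivWithin c s x + ⟪z, derivWithin u s x⟫) / (1 - c x - ⟪z, u x⟫)) :
    HasDerivWithinAt (fun y => 1 - c y - ⟪z, u y⟫) (-h * (1 - c x - ⟪z, u x⟫)) s x := by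
  refine (((hasDerivWithinAt_const x s 1).sub hc.hasDerivWithinAt).sub
    ((hasDerivWithinAt_const x s z).inner ℝ hu.hasDerivWithinAt)).congr_deriv ?_
  rw [hh, neg_mul, div_mul_cancel₀ _ hne, inner_zero_left]
  ring

end Denominator

theorem stmt11_general {d : ℕ}
    (U : Set (EuclideanSpace ℝ (Fin d)))
    (c : ℝ → ℝ) (u : ℝ → EuclideanSpace ℝ (Fin d))
    (hc : ContDiffOn ℝ 2 c (Set.Ici 0)) (hu : ContDiffOn ℝ 2 u (Set.Ici 0))
    (hden : ∀ x : ℝ, 0 ≤ x → ∀ z ∈ U, c x + ⟪z, u x⟫ < 1)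
    (h₀ h₁ : ℝ → ℝ)
    -- for every t ≥ 0 the function h₀ + t·h₁ belongs to the linear-rational family M
    (hmem : ∀ t : ℝ, 0 ≤ t → ∃ z ∈ U, ∀ x : ℝ, 0 ≤ x →
      h₀ x + t * h₁ x =
        (derivWithin c (Set.Ici 0) x + ⟪z, derivWithin u (Set.Ici 0) x⟫) /
          (1 - c x - ⟪z, u x⟫)) :
    ∀ x : ℝ, 0 ≤ x → h₁ x = 0 := by
  choose z hzU hz using fun n : ℕ => hmem n n.cast_nonneg
  set D : ℕ → ℝ → ℝ := fun n x => 1 - c x - ⟪z n, u x⟫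
  have hD₀ : ∀ n, ∀ x ∈ Ici (0 : ℝ), D n x ≠ 0 := fun n x hx =>
    (show 0 < D n x by linarith [hden x hx (z n) (hzU n)]).ne'
  have hD : ∀ n : ℕ, ∀ x ∈ Ici (0 : ℝ),
      HasDerivWithinAt (D n) ((-h₀ x + n * -h₁ x) * D n x) (Ici 0) x := fun n x hx =>
    (hasDerivWithinAt_one_sub_sub_inner_of_eq_div (hc.differentiableOn two_ne_zero x hx)
      (hu.differentiableOn two_ne_zero x hx) (hD₀ n x hx) (hz n x hx)).congr_deriv (by ring)
  obtain ⟨w, hw, hwz, hw0⟩ := exists_affine_dependence (k := ℝ) (fun i : Fin (d + 2) => z i)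
    (by simp)
  intro x hx
  exact neg_eq_zero.mp ((convex_Ici 0).eq_zero_of_sum_mul_eq_zero_of_logDeriv_affine
    (uniqueDiffOn_Ici 0) hD hD₀ hw0
    (fun y _ => sum_mul_sub_inner_eq_zero Finset.univ hw hwz (1 - c y) (u y)) hx)

theorem stmt11 {d : ℕ}
    (U : Set (EuclideanSpace ℝ (Fin d))) (hUopen : IsOpen U) (hUconn : IsConnected U)
    (c : ℝ → ℝ) (u : ℝ → EuclideanSpace ℝ (Fin d))
    (hc : ContDiffOn ℝ 2 c (Set.Ici 0)) (hu : ContDiffOn ℝ 2 u (Set.Ici 0))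
    (hden : ∀ x : ℝ, 0 ≤ x → ∀ z ∈ U, c x + ⟪z, u x⟫ < 1)
    (h₀ h₁ : ℝ → ℝ)
    (hh₀ : ContinuousOn h₀ (Set.Ici 0)) (hh₁ : ContinuousOn h₁ (Set.Ici 0))
    -- for every t ≥ 0 the function h₀ + t·h₁ belongs to the linear-rational family M
    (hmem : ∀ t : ℝ, 0 ≤ t → ∃ z ∈ U, ∀ x : ℝ, 0 ≤ x →
      h₀ x + t * h₁ x =
        (derivWithin c (Set.Ici 0) x + ⟪z, derivWithin u (Set.Ici 0) x⟫) /
          (1 - c x - ⟪z, u x⟫)) :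
    ∀ x : ℝ, 0 ≤ x → h₁ x = 0 :=
  stmt11_general U c u hc hu hden h₀ h₁ hmem
end

section
/- Let U ⊆ ℝ^d be open and convex with 0 ∈ U. For i, j = 1, …, d, let η_{ij} : U → ℝ^d be measurable and locally bounded, with η_{ij} = η_{ji} for all i, j. Then there exists a twice continuously differentiable function A : U → ℝ^d with A(0) = 0 such that: every twice continuously differentiable function g : U → ℝ satisfying ∂_i ∂_j g(y) = ⟨∇g(y), η_{ij}(y)⟩ for all i, j = 1, …, d and all y ∈ U also satisfies g(y) = g(0) + ⟨∇g(0), A(y)⟩ for all y ∈ U. -/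
/-!
Solutions form a vector space `S`. If `∇g(0) = 0`, then along the segment from `0` to `y` the
system gives `‖D²g‖ ≤ (∑ ‖η_ij‖) ‖Dg‖` with `η` bounded on that compact segment, so Grönwall's
inequality forces `Dg = 0` on `U` and `g` is constant. Hence `g(y) - g(0)` is a linear function of
`∇g(0)`, which ranges over a finite-dimensional space. Choosing `h_1, …, h_k ∈ S` whose gradients
at `0` form a basis of it, and vectors `u_m` realising the dual basis, gives
`A(y) = ∑ (h_m(y) - h_m(0)) u_m`, which is `C²` because the `h_m` are.
-/

open Set

section DualSubspace

variable {𝕜 E : Type*} [NontriviallyNormedField 𝕜] [CompleteSpace 𝕜] [NormedAddCommGroup E]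
  [NormedSpace 𝕜 E] [FiniteDimensional 𝕜 E]

theorem Submodule.exists_forall_coe_apply_eq (W : Submodule 𝕜 (E →L[𝕜] 𝕜)) (φ : W →ₗ[𝕜] 𝕜) :
    ∃ u : E, ∀ ξ : W, (ξ : E →L[𝕜] 𝕜) u = φ ξ := by
  obtain ⟨Φ, hΦ⟩ := LinearMap.exists_extend φ
  let e : Module.Dual 𝕜 E ≃ₗ[𝕜] (E →L[𝕜] 𝕜) := LinearMap.toContinuousLinearMap
  refine ⟨(Module.evalEquiv 𝕜 E).symm (Φ ∘ₗ e.toLinearMap), fun ξ => ?_⟩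
  have h := Module.apply_evalEquiv_symm_apply 𝕜 E (e.symm ξ) (Φ ∘ₗ e.toLinearMap)
  simp only [LinearMap.coe_comp, LinearEquiv.coe_coe, Function.comp_apply,
    LinearEquiv.apply_symm_apply] at h
  rw [← hΦ]
  exact h

theorem LinearMap.exists_forall_apply_eq_apply_sum_of_ker_le {V : Type*} [AddCommGroup V]
    [Module 𝕜 V] (D : V →ₗ[𝕜] E →L[𝕜] 𝕜) :
    ∃ (k : ℕ) (h : Fin k → V) (u : Fin k → E), ∀ ℓ : V →ₗ[𝕜] 𝕜, LinearMap.ker D ≤ LinearMap.ker ℓ →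
      ∀ v, ℓ v = D v (∑ m, ℓ (h m) • u m) := by
  have : Module.Free 𝕜 (LinearMap.range D) := Module.Free.of_divisionRing 𝕜 (LinearMap.range D)
  let b := Module.finBasis 𝕜 (LinearMap.range D)
  choose h hh using fun m => LinearMap.mem_range.1 (b m).2
  choose u hu using fun m => (LinearMap.range D).exists_forall_coe_apply_eq (b.coord m)
  refine ⟨_, h, u, fun ℓ hℓ v => ?_⟩
  set c := b.repr (D.rangeRestrict v)
  have hker : v - ∑ m, c m • h m ∈ LinearMap.ker D := by
    have hsum : ∑ m, c m • D (h m) = D v := by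
      have := congrArg Subtype.val (b.sum_repr (D.rangeRestrict v))
      simp only [Submodule.coe_sum, Submodule.coe_smul] at this
      simp only [hh]
      exact this
    simp [hsum]
  have hℓv : ℓ v = ∑ m, c m * ℓ (h m) := by
    have := hℓ hker
    rw [LinearMap.mem_ker, map_sub, map_sum, sub_eq_zero] at this
    simpa using this
  have hDu : ∀ m, D v (u m) = c m := fun m => hu m (D.rangeRestrict v)
  simp [map_sum, hDu, hℓv, mul_comm]

end DualSubspace

section Euclidean

variable {ι 𝕜 F : Type*} [Fintype ι] [DecidableEq ι] [RCLike 𝕜] [NormedAddCommGroup F]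
  [NormedSpace 𝕜 F]

theorem EuclideanSpace.opNorm_le_sum_norm_apply_single (L : EuclideanSpace 𝕜 ι →L[𝕜] F) :
    ‖L‖ ≤ ∑ i, ‖L (EuclideanSpace.single i 1)‖ := by
  refine L.opNorm_le_bound (by positivity) fun v => ?_
  have hv : v = ∑ i, v i • EuclideanSpace.single i (1 : 𝕜) := by
    simpa using ((EuclideanSpace.basisFun ι 𝕜).sum_repr v).symm
  calc ‖L v‖ = ‖∑ i, v i • L (EuclideanSpace.single i 1)‖ := by
        conv_lhs => rw [hv]
        simp
    _ ≤ ∑ i, ‖v‖ * ‖L (EuclideanSpace.single i 1)‖ := by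
        refine norm_sum_le_of_le _ fun i _ => ?_
        rw [norm_smul]
        gcongr
        exact PiLp.norm_apply_le v i
    _ = (∑ i, ‖L (EuclideanSpace.single i 1)‖) * ‖v‖ := by
        rw [← Finset.mul_sum, mul_comm]

theorem EuclideanSpace.opNorm_le_of_apply_single_apply_single_eq
    {B : EuclideanSpace 𝕜 ι →L[𝕜] EuclideanSpace 𝕜 ι →L[𝕜] F}
    {L : EuclideanSpace 𝕜 ι →L[𝕜] F} {η : ι → ι → EuclideanSpace 𝕜 ι}
    (h : ∀ i j, B (EuclideanSpace.single j 1) (EuclideanSpace.single i 1) = L (η i j)) :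
    ‖B‖ ≤ (∑ i, ∑ j, ‖η i j‖) * ‖L‖ :=
  calc ‖B‖ ≤ ∑ j, ∑ i, ‖B (EuclideanSpace.single j 1) (EuclideanSpace.single i 1)‖ :=
        (opNorm_le_sum_norm_apply_single B).trans
          (Finset.sum_le_sum fun j _ => opNorm_le_sum_norm_apply_single _)
    _ ≤ ∑ j, ∑ i, ‖L‖ * ‖η i j‖ := by
        gcongr with j _ i _
        rw [h]
        exact L.le_opNorm _
    _ = (∑ i, ∑ j, ‖η i j‖) * ‖L‖ := by
        rw [Finset.sum_comm]
        simp_rw [mul_comm ‖L‖, Finset.sum_mul]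

end Euclidean

section Segment

variable {E F : Type*} [NormedAddCommGroup E] [NormedSpace ℝ E] [NormedAddCommGroup F]
  [NormedSpace ℝ F]

theorem eq_zero_of_norm_fderiv_le_mul_norm_on_segment {f : E → F} {x y : E} {K : ℝ}
    (hf : ∀ z ∈ segment ℝ x y, DifferentiableAt ℝ f z)
    (hK : ∀ z ∈ segment ℝ x y, ‖fderiv ℝ f z‖ ≤ K * ‖f z‖) (hx : f x = 0) : f y = 0 := by
  have hmem : ∀ t ∈ Icc (0 : ℝ) 1, AffineMap.lineMap x y t ∈ segment ℝ x y := by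
    rw [segment_eq_image_lineMap]
    exact fun t ht => mem_image_of_mem _ ht
  have hv : ∀ t ∈ Icc (0 : ℝ) 1, HasDerivAt (fun t => f (AffineMap.lineMap x y t))
      (fderiv ℝ f (AffineMap.lineMap x y t) (y - x)) t := fun t ht =>
    (hf _ (hmem t ht)).hasFDerivAt.comp_hasDerivAt t AffineMap.hasDerivAt_lineMap
  have := eq_zero_of_abs_deriv_le_mul_abs_self_of_eq_zero_right (K := K * ‖y - x‖)
    (fun t ht => (hv t ht).continuousAt.continuousWithinAt)
    (fun t ht => (hv t (Ico_subset_Icc_self ht)).hasDerivWithinAt) (by simpa using hx)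
    (fun t ht => ?_) 1 (right_mem_Icc.2 zero_le_one)
  · simpa using this
  calc _ ≤ ‖fderiv ℝ f (AffineMap.lineMap x y t)‖ * ‖y - x‖ := ContinuousLinearMap.le_opNorm _ _
    _ ≤ K * ‖f (AffineMap.lineMap x y t)‖ * ‖y - x‖ := by
        gcongr
        exact hK _ (hmem t (Ico_subset_Icc_self ht))
    _ = K * ‖y - x‖ * ‖f (AffineMap.lineMap x y t)‖ := by ring

theorem ContDiffOn.differentiableAt_fderiv {g : E → F} {U : Set E} (hg : ContDiffOn ℝ 2 g U)
    (hU : IsOpen U) {y : E} (hy : y ∈ U) : DifferentiableAt ℝ (fderiv ℝ g) y :=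
  ((hg.contDiffAt (hU.mem_nhds hy)).fderiv_right (m := 1) le_rfl).differentiableAt one_ne_zero

end Segment

section HessianSystem

variable {ι : Type*} [Fintype ι] [DecidableEq ι]

def hessianSolutions {U : Set (EuclideanSpace ℝ ι)} (hU : IsOpen U)
    (η : ι → ι → EuclideanSpace ℝ ι → EuclideanSpace ℝ ι) :
    Submodule ℝ (EuclideanSpace ℝ ι → ℝ) where
  carrier := {g | ContDiffOn ℝ 2 g U ∧ ∀ i j, ∀ y ∈ U,
    fderiv ℝ (fderiv ℝ g) y (EuclideanSpace.single j 1) (EuclideanSpace.single i 1) =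
      fderiv ℝ g y (η i j y)}
  add_mem' := by
    rintro g h ⟨hg, hgη⟩ ⟨hh, hhη⟩
    refine ⟨hg.add hh, fun i j y hy => ?_⟩
    have hsum : fderiv ℝ (g + h) =ᶠ[nhds y] fderiv ℝ g + fderiv ℝ h := by
      filter_upwards [hU.mem_nhds hy] with z hz
      exact fderiv_add ((hg.contDiffAt (hU.mem_nhds hz)).differentiableAt two_ne_zero)
        ((hh.contDiffAt (hU.mem_nhds hz)).differentiableAt two_ne_zero)
    rw [hsum.fderiv_eq, hsum.eq_of_nhds, fderiv_add (hg.differentiableAt_fderiv hU hy)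
      (hh.differentiableAt_fderiv hU hy)]
    simp [hgη i j y hy, hhη i j y hy]
  zero_mem' := ⟨contDiffOn_const, by simp⟩
  smul_mem' := by
    rintro c g ⟨hg, hgη⟩
    refine ⟨hg.const_smul c, fun i j y hy => ?_⟩
    rw [fderiv_const_smul_field, fderiv_const_smul (hg.differentiableAt_fderiv hU hy)]
    simp [hgη i j y hy]

theorem eq_of_mem_hessianSolutions_of_fderiv_eq_zero {U : Set (EuclideanSpace ℝ ι)}
    (hU : IsOpen U) (hUconv : Convex ℝ U) {η : ι → ι → EuclideanSpace ℝ ι → EuclideanSpace ℝ ι}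
    (hbd : ∀ i j, ∀ K ⊆ U, IsCompact K → ∃ C : ℝ, ∀ y ∈ K, ‖η i j y‖ ≤ C)
    {g : EuclideanSpace ℝ ι → ℝ} (hg : g ∈ hessianSolutions hU η) {x₀ : EuclideanSpace ℝ ι}
    (hx₀ : x₀ ∈ U) (h0 : fderiv ℝ g x₀ = 0) {y : EuclideanSpace ℝ ι} (hy : y ∈ U) :
    g y = g x₀ := by
  obtain ⟨hg, hgη⟩ := hg
  have hfderiv : ∀ y ∈ U, fderiv ℝ g y = 0 := by
    intro y hy
    have hseg := hUconv.segment_subset hx₀ hy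
    have hcpt : IsCompact (segment ℝ x₀ y) := by
      rw [segment_eq_image_lineMap]
      exact isCompact_Icc.image AffineMap.lineMap_continuous
    choose C hC using fun i j => hbd i j _ hseg hcpt
    refine eq_zero_of_norm_fderiv_le_mul_norm_on_segment (K := ∑ i, ∑ j, C i j)
      (fun z hz => hg.differentiableAt_fderiv hU (hseg hz)) (fun z hz => ?_) h0
    calc ‖fderiv ℝ (fderiv ℝ g) z‖ ≤ (∑ i, ∑ j, ‖η i j z‖) * ‖fderiv ℝ g z‖ :=
          EuclideanSpace.opNorm_le_of_apply_single_apply_single_eq (hgη · · z (hseg hz))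
      _ ≤ (∑ i, ∑ j, C i j) * ‖fderiv ℝ g z‖ := by
          gcongr with i _ j _
          exact hC i j z hz
  exact hU.is_const_of_fderiv_eq_zero hUconv.isPreconnected
    (hg.differentiableOn two_ne_zero) hfderiv hy hx₀

end HessianSystem

theorem stmt12_general {d : ℕ}
    (U : Set (EuclideanSpace ℝ (Fin d))) (hUopen : IsOpen U)
    (hUconv : Convex ℝ U) (h0U : (0 : EuclideanSpace ℝ (Fin d)) ∈ U)
    (η : Fin d → Fin d → EuclideanSpace ℝ (Fin d) → EuclideanSpace ℝ (Fin d))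
    (hbd : ∀ i j, ∀ K ⊆ U, IsCompact K → ∃ C : ℝ, ∀ y ∈ K, ‖η i j y‖ ≤ C) :
    ∃ A : EuclideanSpace ℝ (Fin d) → EuclideanSpace ℝ (Fin d),
      ContDiffOn ℝ 2 A U ∧ A 0 = 0 ∧
      ∀ g : EuclideanSpace ℝ (Fin d) → ℝ, ContDiffOn ℝ 2 g U →
        (∀ i j, ∀ y ∈ U,
          fderiv ℝ (fun w => fderiv ℝ g w (EuclideanSpace.single i 1)) y
              (EuclideanSpace.single j 1) =
            fderiv ℝ g y (η i j y)) →
        ∀ y ∈ U, g y = g 0 + fderiv ℝ g 0 (A y) := by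
  let S := hessianSolutions hUopen η
  have hdiff0 : ∀ g : S, DifferentiableAt ℝ (g : EuclideanSpace ℝ (Fin d) → ℝ) 0 := fun g =>
    (g.2.1.contDiffAt (hUopen.mem_nhds h0U)).differentiableAt two_ne_zero
  let D : S →ₗ[ℝ] EuclideanSpace ℝ (Fin d) →L[ℝ] ℝ :=
    { toFun := fun g => fderiv ℝ g 0
      map_add' := fun g h => fderiv_add (hdiff0 g) (hdiff0 h)
      map_smul' := fun c g => by simp [fderiv_const_smul_field] }
  obtain ⟨k, h, u, hrep⟩ := D.exists_forall_apply_eq_apply_sum_of_ker_le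
  refine ⟨fun y => ∑ m, ((h m).1 y - (h m).1 0) • u m,
    ContDiffOn.sum fun m _ => ((h m).2.1.sub contDiffOn_const).smul contDiffOn_const,
    by simp, fun g hg hgη y hy => ?_⟩
  have hgS : g ∈ S := ⟨hg, fun i j z hz => by
    rw [← hgη i j z hz, fderiv_clm_apply (hg.differentiableAt_fderiv hUopen hz)
      (differentiableAt_const _)]
    simp⟩
  let ℓ : S →ₗ[ℝ] ℝ :=
    (LinearMap.proj (R := ℝ) (φ := fun _ => ℝ) y - LinearMap.proj 0) ∘ₗ S.subtype
  have hker : LinearMap.ker D ≤ LinearMap.ker ℓ := fun v hv =>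
    sub_eq_zero.2 (eq_of_mem_hessianSolutions_of_fderiv_eq_zero hUopen hUconv hbd v.2 h0U hv hy)
  have hgy : g y - g 0 = fderiv ℝ g 0 (∑ m, ((h m).1 y - (h m).1 0) • u m) :=
    hrep ℓ hker ⟨g, hgS⟩
  exact eq_add_of_sub_eq' hgy

theorem stmt12 {d : ℕ}
    (U : Set (EuclideanSpace ℝ (Fin d))) (hUopen : IsOpen U)
    (hUconv : Convex ℝ U) (h0U : (0 : EuclideanSpace ℝ (Fin d)) ∈ U)
    (η : Fin d → Fin d → EuclideanSpace ℝ (Fin d) → EuclideanSpace ℝ (Fin d))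
    (hmeas : ∀ i j, Measurable fun y : U => η i j y)
    (hbd : ∀ i j, ∀ K ⊆ U, IsCompact K → ∃ C : ℝ, ∀ y ∈ K, ‖η i j y‖ ≤ C)
    (hsymm : ∀ i j, Set.EqOn (η i j) (η j i) U) :
    ∃ A : EuclideanSpace ℝ (Fin d) → EuclideanSpace ℝ (Fin d),
      ContDiffOn ℝ 2 A U ∧ A 0 = 0 ∧
      ∀ g : EuclideanSpace ℝ (Fin d) → ℝ, ContDiffOn ℝ 2 g U →
        (∀ i j, ∀ y ∈ U,
          fderiv ℝ (fun w => fderiv ℝ g w (EuclideanSpace.single i 1)) y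
              (EuclideanSpace.single j 1) =
            fderiv ℝ g y (η i j y)) →
        ∀ y ∈ U, g y = g 0 + fderiv ℝ g 0 (A y) :=
  stmt12_general U hUopen hUconv h0U η hbd
end

section
/- Gronwall-type uniqueness: let U ⊆ ℝ^d be open and convex with 0 ∈ U, and for i, j = 1, …, d let η_{ij} : U → ℝ^d be measurable and locally bounded. If h : U → ℝ is twice continuously differentiable with ∇h(0) = 0 and ∂_i ∂_j h(y) = ⟨∇h(y), η_{ij}(y)⟩ for all i, j and all y ∈ U, then ∇h vanishes identically on U; in particular h is constant, and if moreover h(0) = 0 then h ≡ 0 on U. -/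
/-!
Along the segment from `0` to `y`, the gradient `g t = ∇h (t • y)` solves the linear system
`g' t = D²h (t • y) y`, and the equation for `∂ᵢ∂ⱼh` expresses every entry of `D²h (t • y)` as
`g t` applied to a vector `η i j (t • y)`. These vectors are bounded on the compact segment,
so `‖g'‖ ≤ K ‖g‖`, and Grönwall's inequality with `g 0 = 0` gives `g ≡ 0`. A function with
vanishing derivative on the connected set `U` is constant.
-/

open Set

theorem EuclideanSpace.sum_apply_smul_single {ι : Type*} [Fintype ι] [DecidableEq ι]
    (x : EuclideanSpace ℝ ι) : ∑ i, x i • EuclideanSpace.single i (1 : ℝ) = x := by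
  simpa using (EuclideanSpace.basisFun ι ℝ).sum_repr x

theorem EuclideanSpace.opNorm_le_of_apply_single_single {ι : Type*} [Fintype ι] [DecidableEq ι]
    {B : EuclideanSpace ℝ ι →L[ℝ] EuclideanSpace ℝ ι →L[ℝ] ℝ} {L : EuclideanSpace ℝ ι →L[ℝ] ℝ}
    {w : ι → ι → EuclideanSpace ℝ ι} {C : ℝ} (hC : 0 ≤ C) (hw : ∀ i j, ‖w i j‖ ≤ C)
    (hB : ∀ i j, B (single j 1) (single i 1) = L (w i j)) :
    ‖B‖ ≤ Fintype.card ι ^ 2 * C * ‖L‖ := by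
  refine B.opNorm_le_bound₂ (by positivity) fun v u => ?_
  have hexp : B v u = ∑ i, ∑ j, v j * (u i * L (w i j)) := by
    conv_lhs => rw [← sum_apply_smul_single v, ← sum_apply_smul_single u]
    simp [map_sum, hB, Finset.mul_sum, mul_left_comm]
  have hterm : ∀ i j, ‖v j * (u i * L (w i j))‖ ≤ C * ‖L‖ * ‖v‖ * ‖u‖ := fun i j =>
    calc ‖v j * (u i * L (w i j))‖ = ‖v j‖ * ‖u i‖ * ‖L (w i j)‖ := by
          simp only [norm_mul, mul_assoc]
      _ ≤ ‖v‖ * ‖u‖ * (‖L‖ * C) := by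
        gcongr
        · exact PiLp.norm_apply_le v j
        · exact PiLp.norm_apply_le u i
        · exact L.le_opNorm_of_le (hw i j)
      _ = C * ‖L‖ * ‖v‖ * ‖u‖ := by ring
  calc ‖B v u‖ ≤ ∑ i, ∑ j, ‖v j * (u i * L (w i j))‖ := by
        rw [hexp]; exact (norm_sum_le _ _).trans (Finset.sum_le_sum fun i _ => norm_sum_le _ _)
    _ ≤ ∑ _i : ι, ∑ _j : ι, C * ‖L‖ * ‖v‖ * ‖u‖ :=
        Finset.sum_le_sum fun i _ => Finset.sum_le_sum fun j _ => hterm i j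
    _ = Fintype.card ι ^ 2 * C * ‖L‖ * ‖v‖ * ‖u‖ := by
        simp only [Finset.sum_const, Finset.card_univ, nsmul_eq_mul]; ring

theorem isCompact_segment {E : Type*} [NormedAddCommGroup E] [NormedSpace ℝ E] (a b : E) :
    IsCompact (segment ℝ a b) := by
  rw [segment_eq_image_lineMap]
  exact isCompact_Icc.image AffineMap.lineMap_continuous

theorem fderiv_apply_const_apply {E G H : Type*} [NormedAddCommGroup E] [NormedSpace ℝ E]
    [NormedAddCommGroup G] [NormedSpace ℝ G] [NormedAddCommGroup H] [NormedSpace ℝ H]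
    {F : E → G →L[ℝ] H} {y : E} (hF : DifferentiableAt ℝ F y) (v : G) (u : E) :
    fderiv ℝ (fun w => F w v) y u = fderiv ℝ F y u v := by
  simp [fderiv_clm_apply hF (differentiableAt_const v)]

theorem eq_zero_of_norm_fderiv_le_mul_norm_of_mem_segment {E G : Type*} [NormedAddCommGroup E]
    [NormedSpace ℝ E] [NormedAddCommGroup G] [NormedSpace ℝ G] {F : E → G} {a b : E} {K : ℝ}
    (hF : ∀ z ∈ segment ℝ a b, DifferentiableAt ℝ F z)
    (hbound : ∀ z ∈ segment ℝ a b, ‖fderiv ℝ F z (b - a)‖ ≤ K * ‖F z‖) (ha : F a = 0) :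
    F b = 0 := by
  have hmem : ∀ t ∈ Icc (0 : ℝ) 1, AffineMap.lineMap a b t ∈ segment ℝ a b :=
    fun t ht => lineMap_mem_segment ℝ a b ht
  have hderiv : ∀ t ∈ Icc (0 : ℝ) 1, HasDerivAt (fun t => F (AffineMap.lineMap a b t))
      (fderiv ℝ F (AffineMap.lineMap a b t) (b - a)) t :=
    fun t ht => (hF _ (hmem t ht)).hasFDerivAt.comp_hasDerivAt t AffineMap.hasDerivAt_lineMap
  simpa using eq_zero_of_abs_deriv_le_mul_abs_self_of_eq_zero_right
    (fun t ht => (hderiv t ht).continuousAt.continuousWithinAt)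
    (fun t ht => (hderiv t (Ico_subset_Icc_self ht)).hasDerivWithinAt) (by simpa using ha)
    (fun t ht => hbound _ (hmem t (Ico_subset_Icc_self ht))) 1 (right_mem_Icc.2 zero_le_one)

theorem Convex.eq_zero_of_fderiv_apply_single_single_eq {ι : Type*} [Fintype ι] [DecidableEq ι]
    {U : Set (EuclideanSpace ℝ ι)} (hU : Convex ℝ U)
    {F : EuclideanSpace ℝ ι → EuclideanSpace ℝ ι →L[ℝ] ℝ}
    {η : ι → ι → EuclideanSpace ℝ ι → EuclideanSpace ℝ ι}
    (hF : ∀ z ∈ U, DifferentiableAt ℝ F z)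
    (hbd : ∀ i j, ∀ K ⊆ U, IsCompact K → ∃ C : ℝ, ∀ y ∈ K, ‖η i j y‖ ≤ C)
    (hη : ∀ z ∈ U, ∀ i j,
      fderiv ℝ F z (EuclideanSpace.single j 1) (EuclideanSpace.single i 1) = F z (η i j z))
    {a b : EuclideanSpace ℝ ι} (ha : a ∈ U) (hb : b ∈ U) (hFa : F a = 0) : F b = 0 := by
  have hseg : segment ℝ a b ⊆ U := hU.segment_subset ha hb
  choose C hC using fun i j => hbd i j _ hseg (isCompact_segment a b)
  obtain ⟨M, hM⟩ := Finite.bddAbove_range fun p : ι × ι => C p.1 p.2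
  have hηM : ∀ z ∈ segment ℝ a b, ∀ i j, ‖η i j z‖ ≤ max M 0 := fun z hz i j =>
    (hC i j z hz).trans ((hM ⟨(i, j), rfl⟩).trans (le_max_left _ _))
  refine eq_zero_of_norm_fderiv_le_mul_norm_of_mem_segment
    (K := Fintype.card ι ^ 2 * max M 0 * ‖b - a‖) (fun z hz => hF z (hseg hz))
    (fun z hz => ?_) hFa
  calc ‖fderiv ℝ F z (b - a)‖ ≤ ‖fderiv ℝ F z‖ * ‖b - a‖ := (fderiv ℝ F z).le_opNorm _
    _ ≤ Fintype.card ι ^ 2 * max M 0 * ‖F z‖ * ‖b - a‖ := by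
        gcongr
        exact EuclideanSpace.opNorm_le_of_apply_single_single (le_max_right _ _) (hηM z hz)
          (hη z (hseg hz))
    _ = Fintype.card ι ^ 2 * max M 0 * ‖b - a‖ * ‖F z‖ := by ring

theorem stmt13_general {d : ℕ}
    (U : Set (EuclideanSpace ℝ (Fin d))) (hUopen : IsOpen U)
    (hUconv : Convex ℝ U) (h0U : (0 : EuclideanSpace ℝ (Fin d)) ∈ U)
    (η : Fin d → Fin d → EuclideanSpace ℝ (Fin d) → EuclideanSpace ℝ (Fin d))
    (hbd : ∀ i j, ∀ K ⊆ U, IsCompact K → ∃ C : ℝ, ∀ y ∈ K, ‖η i j y‖ ≤ C)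
    (h : EuclideanSpace ℝ (Fin d) → ℝ) (hh : ContDiffOn ℝ 2 h U)
    (hgrad0 : fderiv ℝ h 0 = 0)
    (hpde : ∀ i j, ∀ y ∈ U,
      fderiv ℝ (fun w => fderiv ℝ h w (EuclideanSpace.single i 1)) y
          (EuclideanSpace.single j 1) =
        fderiv ℝ h y (η i j y)) :
    (∀ y ∈ U, fderiv ℝ h y = 0) ∧
    (∀ y ∈ U, h y = h 0) ∧
    (h 0 = 0 → ∀ y ∈ U, h y = 0) := by
  have hdiff : ∀ z ∈ U, DifferentiableAt ℝ (fderiv ℝ h) z := fun z hz =>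
    ((hh.fderiv_of_isOpen hUopen (m := 1) (by norm_num)).differentiableOn one_ne_zero z
      hz).differentiableAt (hUopen.mem_nhds hz)
  have hsecond : ∀ z ∈ U, ∀ i j, fderiv ℝ (fderiv ℝ h) z (EuclideanSpace.single j 1)
      (EuclideanSpace.single i 1) = fderiv ℝ h z (η i j z) := fun z hz i j => by
    rw [← fderiv_apply_const_apply (hdiff z hz), hpde i j z hz]
  have hgrad : ∀ y ∈ U, fderiv ℝ h y = 0 := fun y hy =>
    hUconv.eq_zero_of_fderiv_apply_single_single_eq hdiff hbd hsecond h0U hy hgrad0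
  have hconst : ∀ y ∈ U, h y = h 0 := fun y hy =>
    hUopen.is_const_of_fderiv_eq_zero hUconv.isPreconnected (hh.differentiableOn (by norm_num))
      hgrad hy h0U
  exact ⟨hgrad, hconst, fun h0 y hy => (hconst y hy).trans h0⟩

theorem stmt13 {d : ℕ}
    (U : Set (EuclideanSpace ℝ (Fin d))) (hUopen : IsOpen U)
    (hUconv : Convex ℝ U) (h0U : (0 : EuclideanSpace ℝ (Fin d)) ∈ U)
    (η : Fin d → Fin d → EuclideanSpace ℝ (Fin d) → EuclideanSpace ℝ (Fin d))
    (hmeas : ∀ i j, Measurable fun y : U => η i j y)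
    (hbd : ∀ i j, ∀ K ⊆ U, IsCompact K → ∃ C : ℝ, ∀ y ∈ K, ‖η i j y‖ ≤ C)
    (h : EuclideanSpace ℝ (Fin d) → ℝ) (hh : ContDiffOn ℝ 2 h U)
    (hgrad0 : fderiv ℝ h 0 = 0)
    (hpde : ∀ i j, ∀ y ∈ U,
      fderiv ℝ (fun w => fderiv ℝ h w (EuclideanSpace.single i 1)) y
          (EuclideanSpace.single j 1) =
        fderiv ℝ h y (η i j y)) :
    (∀ y ∈ U, fderiv ℝ h y = 0) ∧
    (∀ y ∈ U, h y = h 0) ∧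
    (h 0 = 0 → ∀ y ∈ U, h y = 0) :=
  stmt13_general U hUopen hUconv h0U η hbd h hh hgrad0 hpde
end

section
/- Let α > 0, let λ₁ < λ₂ < … < λ_d < −α/2, and let z ∈ (−∞, 0)^d. Define f : ℝ≥0 → ℝ by f(x) := (Σ_{j=1}^d z_j λ_j e^{λ_j x}) / (1 − Σ_{j=1}^d z_j e^{λ_j x}). Then the denominator satisfies 1 − Σ_{j=1}^d z_j e^{λ_j x} ≥ 1 > 0 for all x ≥ 0, f is continuously differentiable on ℝ≥0, and |f(0)|² + ∫₀^∞ |f′(x)|² e^{α x} dx < ∞ (so that f belongs to the forward curve space H_w with weight w(x) = e^{α x}). -/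
/-!
Since every `z j` is negative, the denominator `D = 1 - ∑ z j e^{λ_j x}` is at least `1`,
so `f = N / D` is smooth and `f' = (N' D + N²) / D²` is bounded by `|N'| + N²`. All exponents
are at most some `m < -α/2`, hence `|f'(x)| ≤ K e^{m x}` for `x ≥ 0`, and
`|f'(x)|² e^{α x} ≤ K² e^{(2m + α) x}` is integrable on `(0, ∞)`.
-/

open MeasureTheory Set Filter Topology

noncomputable def expPoly {ι : Type*} [Fintype ι] (c lam : ι → ℝ) (x : ℝ) : ℝ :=
  ∑ j, c j * Real.exp (lam j * x)

section ExpPoly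

variable {ι : Type*} [Fintype ι]

theorem hasDerivAt_expPoly (c lam : ι → ℝ) (x : ℝ) :
    HasDerivAt (expPoly c lam) (expPoly (fun j => c j * lam j) lam x) x := by
  refine HasDerivAt.fun_sum fun j _ => ?_
  have := (((hasDerivAt_id x).const_mul (lam j)).exp).const_mul (c j)
  simpa [mul_comm, mul_left_comm, mul_assoc] using this

theorem contDiff_expPoly {n : WithTop ℕ∞} (c lam : ι → ℝ) : ContDiff ℝ n (expPoly c lam) :=
  ContDiff.sum fun _ _ => contDiff_const.mul (Real.contDiff_exp.comp (contDiff_const.mul contDiff_id))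

theorem one_le_one_sub_expPoly {c : ι → ℝ} (hc : ∀ j, c j ≤ 0) (lam : ι → ℝ) (x : ℝ) :
    1 ≤ 1 - expPoly c lam x := by
  have : expPoly c lam x ≤ 0 :=
    Finset.sum_nonpos fun j _ => mul_nonpos_of_nonpos_of_nonneg (hc j) (Real.exp_pos _).le
  linarith

theorem abs_expPoly_le (c : ι → ℝ) {lam : ι → ℝ} {m : ℝ} (hlam : ∀ j, lam j ≤ m) {x : ℝ}
    (hx : 0 ≤ x) : |expPoly c lam x| ≤ (∑ j, |c j|) * Real.exp (m * x) := by
  calc |expPoly c lam x| ≤ ∑ j, |c j * Real.exp (lam j * x)| := Finset.abs_sum_le_sum_abs _ _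
    _ ≤ ∑ j, |c j| * Real.exp (m * x) := by
      refine Finset.sum_le_sum fun j _ => ?_
      rw [abs_mul, Real.abs_exp]
      gcongr
      exact hlam j
    _ = (∑ j, |c j|) * Real.exp (m * x) := (Finset.sum_mul _ _ _).symm

end ExpPoly

noncomputable def expRatio {ι : Type*} [Fintype ι] (z lam : ι → ℝ) (x : ℝ) : ℝ :=
  expPoly (fun j => z j * lam j) lam x / (1 - expPoly z lam x)

section ExpRatio

variable {ι : Type*} [Fintype ι] {z lam : ι → ℝ}

theorem contDiff_expRatio {n : WithTop ℕ∞} (hz : ∀ j, z j ≤ 0) :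
    ContDiff ℝ n (expRatio z lam) :=
  (contDiff_expPoly _ _).div (contDiff_const.sub (contDiff_expPoly _ _))
    fun x => (zero_lt_one.trans_le (one_le_one_sub_expPoly hz lam x)).ne'

theorem hasDerivAt_expRatio (hz : ∀ j, z j ≤ 0) (x : ℝ) :
    HasDerivAt (expRatio z lam)
      ((expPoly (fun j => z j * lam j * lam j) lam x * (1 - expPoly z lam x) +
          expPoly (fun j => z j * lam j) lam x ^ 2) / (1 - expPoly z lam x) ^ 2) x := by
  have hD := (hasDerivAt_const x (1 : ℝ)).fun_sub (hasDerivAt_expPoly z lam x)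
  refine ((hasDerivAt_expPoly (fun j => z j * lam j) lam x).fun_div hD
    (zero_lt_one.trans_le (one_le_one_sub_expPoly hz lam x)).ne').congr_deriv ?_
  ring

theorem abs_add_sq_div_sq_le {a b D : ℝ} (hD : 1 ≤ D) : |(a * D + b ^ 2) / D ^ 2| ≤ |a| + b ^ 2 := by
  have hD2 : D ≤ D ^ 2 := by nlinarith
  have hD0 : 0 < D ^ 2 := by positivity
  rw [abs_div, abs_of_pos hD0, div_le_iff₀ hD0]
  calc |a * D + b ^ 2| ≤ |a * D| + |b ^ 2| := abs_add_le _ _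
    _ = |a| * D + b ^ 2 := by
        rw [abs_mul, abs_of_pos (zero_lt_one.trans_le hD), abs_of_nonneg (sq_nonneg b)]
    _ ≤ (|a| + b ^ 2) * D ^ 2 := by nlinarith [abs_nonneg a, sq_nonneg b]

theorem abs_deriv_expRatio_le (hz : ∀ j, z j ≤ 0) {m : ℝ} (hm : m ≤ 0) (hlam : ∀ j, lam j ≤ m)
    {x : ℝ} (hx : 0 ≤ x) :
    |deriv (expRatio z lam) x| ≤
      (∑ j, |z j * lam j * lam j| + (∑ j, |z j * lam j|) ^ 2) * Real.exp (m * x) := by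
  set A := ∑ j, |z j * lam j|
  set E := Real.exp (m * x)
  have hE : E ≤ 1 := Real.exp_le_one_iff.2 (mul_nonpos_of_nonpos_of_nonneg hm hx)
  have hN := abs_expPoly_le (fun j => z j * lam j) hlam hx
  have hN2 : expPoly (fun j => z j * lam j) lam x ^ 2 ≤ A ^ 2 * E := by
    calc _ = |expPoly (fun j => z j * lam j) lam x| ^ 2 := (sq_abs _).symm
      _ ≤ (A * E) ^ 2 := by gcongr
      _ = A ^ 2 * E * E := by ring
      _ ≤ A ^ 2 * E := mul_le_of_le_one_right (by positivity) hE
  rw [(hasDerivAt_expRatio hz x).deriv]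
  calc _ ≤ _ := abs_add_sq_div_sq_le (one_le_one_sub_expPoly hz lam x)
    _ ≤ _ := add_le_add (abs_expPoly_le _ hlam hx) hN2
    _ = _ := by ring

end ExpRatio

theorem exists_lt_forall_lt_of_finite {ι : Type*} [Finite ι] {b : ℝ} {lam : ι → ℝ}
    (hlam : ∀ j, lam j < b) : ∃ m < b, ∀ j, lam j < m := by
  have hlam' : ∀ᶠ m in 𝓝[<] b, ∀ j, lam j < m :=
    eventually_all.2 fun j => mem_of_superset (Ioo_mem_nhdsLT (hlam j)) fun _ h => h.1
  exact (hlam'.and self_mem_nhdsWithin).exists.imp fun m h => ⟨h.2, h.1⟩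

theorem lintegral_sq_mul_exp_lt_top {φ : ℝ → ℝ} {K m α : ℝ} (hmα : 2 * m + α < 0)
    (hφ : ∀ x, 0 < x → |φ x| ≤ K * Real.exp (m * x)) :
    ∫⁻ x in Ioi 0, ENNReal.ofReal (|φ x| ^ 2 * Real.exp (α * x)) < ⊤ := by
  have hint : IntegrableOn (fun x => K ^ 2 * Real.exp (-(-(2 * m + α)) * x)) (Ioi 0) :=
    (exp_neg_integrableOn_Ioi 0 (neg_pos.2 hmα)).const_mul _
  refine lt_of_le_of_lt (setLIntegral_mono' measurableSet_Ioi fun x hx => ?_)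
    hint.setLIntegral_lt_top
  refine ENNReal.ofReal_le_ofReal ?_
  calc |φ x| ^ 2 * Real.exp (α * x) ≤ (K * Real.exp (m * x)) ^ 2 * Real.exp (α * x) := by
        gcongr
        exact hφ x hx
    _ = K ^ 2 * Real.exp (-(-(2 * m + α)) * x) := by
        rw [mul_pow, ← Real.exp_nat_mul, mul_assoc, ← Real.exp_add]
        ring_nf

theorem stmt14_general {d : ℕ} (α : ℝ) (hα : 0 < α)
    (lam : Fin d → ℝ) (hlt : ∀ j, lam j < -α / 2)
    (z : Fin d → ℝ) (hz : ∀ j, z j < 0)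
    (f : ℝ → ℝ)
    (hf : ∀ x : ℝ, 0 ≤ x →
      f x = (∑ j, z j * lam j * Real.exp (lam j * x)) /
        (1 - ∑ j, z j * Real.exp (lam j * x))) :
    -- the denominator is bounded below by 1
    (∀ x : ℝ, 0 ≤ x → 1 ≤ 1 - ∑ j, z j * Real.exp (lam j * x)) ∧
    -- f is continuously differentiable on ℝ≥0
    ContDiffOn ℝ 1 f (Set.Ici 0) ∧
    -- |f(0)|² + ∫₀^∞ |f′(x)|² e^{αx} dx < ∞
    ENNReal.ofReal (|f 0| ^ 2) +
        ∫⁻ x in Set.Ioi (0:ℝ),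
          ENNReal.ofReal (|derivWithin f (Set.Ici 0) x| ^ 2 * Real.exp (α * x)) < ⊤ := by
  have hz' : ∀ j, z j ≤ 0 := fun j => (hz j).le
  have hfg : EqOn f (expRatio z lam) (Ici 0) := hf
  have hderiv (x : ℝ) (hx : 0 < x) : derivWithin f (Ici 0) x = deriv (expRatio z lam) x := by
    rw [derivWithin_congr hfg (hfg hx.le), derivWithin_of_mem_nhds (Ici_mem_nhds hx)]
  obtain ⟨m, hm, hlam⟩ := exists_lt_forall_lt_of_finite hlt
  refine ⟨fun x _ => one_le_one_sub_expPoly hz' lam x,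
    (contDiff_expRatio hz').contDiffOn.congr hfg,
    ENNReal.add_lt_top.2 ⟨ENNReal.ofReal_lt_top, lintegral_sq_mul_exp_lt_top (m := m) (by linarith)
      fun x hx => (congrArg abs (hderiv x hx)).trans_le
        (abs_deriv_expRatio_le hz' (by linarith) (fun j => (hlam j).le) hx.le)⟩⟩

theorem stmt14 {d : ℕ} (α : ℝ) (hα : 0 < α)
    (lam : Fin d → ℝ) (hmono : StrictMono lam) (hlt : ∀ j, lam j < -α / 2)
    (z : Fin d → ℝ) (hz : ∀ j, z j < 0)
    (f : ℝ → ℝ)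
    (hf : ∀ x : ℝ, 0 ≤ x →
      f x = (∑ j, z j * lam j * Real.exp (lam j * x)) /
        (1 - ∑ j, z j * Real.exp (lam j * x))) :
    -- the denominator is bounded below by 1
    (∀ x : ℝ, 0 ≤ x → 1 ≤ 1 - ∑ j, z j * Real.exp (lam j * x)) ∧
    -- f is continuously differentiable on ℝ≥0
    ContDiffOn ℝ 1 f (Set.Ici 0) ∧
    -- |f(0)|² + ∫₀^∞ |f′(x)|² e^{αx} dx < ∞
    ENNReal.ofReal (|f 0| ^ 2) +
        ∫⁻ x in Set.Ioi (0:ℝ),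
          ENNReal.ofReal (|derivWithin f (Set.Ici 0) x| ^ 2 * Real.exp (α * x)) < ⊤ :=
  stmt14_general α hα lam hlt z hz f hf
end
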